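/- arXiv:1206.2558 — 5 statements merged into one kernel-verified Lean document; each statement's English description precedes it below -/
import Mathlib

section
/- Let p,q ≥ 2 be coprime integers and n ≥ 1 an integer, and let Δ_j be the increments of the tau function of Σ(p,q,pqn-1). Then for every integer i ≥ 0 and every integer j with pqi + 1 ≤ j ≤ pq(i+1): if (i+1)pq - j ∈ S_{p,q} then Δ_j = ⌊jn/(pqn-1)⌋ - i, and if (i+1)pq - j ∉ S_{p,q} then Δ_j = ⌊jn/(pqn-1)⌋ - i - 1. -/
/-- The numerical semigroup `S_{p,q} = {ap + bq : a,b ∈ ℤ_{≥0}}`, as a set of integers. -/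
def Spq (p q : ℤ) : Set ℤ := {s | ∃ a b : ℤ, 0 ≤ a ∧ 0 ≤ b ∧ s = a * p + b * q}

/-- `Δ_j = 1 - j·e₀ - Σᵢ ⌈j·bᵢ/aᵢ⌉` for the Seifert data
`(e₀, (p,p'), (q,q'), (pqn-1, pqn-n-1))` with `e₀ = -2` of `Σ(p,q,pqn-1)`. -/
noncomputable def brieskornDelta (p q n p' q' : ℤ) (j : ℤ) : ℤ :=
  1 + 2 * j - (⌈(j * p' : ℚ) / (p : ℚ)⌉ + ⌈(j * q' : ℚ) / (q : ℚ)⌉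
    + ⌈(j * (p * q * n - n - 1) : ℚ) / (p * q * n - 1 : ℚ)⌉)

/-- The tau function `τ(k) = Σ_{j=0}^{k-1} Δ_j` of `Σ(p,q,pqn-1)`. -/
noncomputable def brieskornTau (p q n p' q' : ℤ) (k : ℤ) : ℤ :=
  ∑ j ∈ Finset.range k.toNat, brieskornDelta p q n p' q' (j : ℤ)

/-- `α_i = #{s ∈ ℤ_{≥0} : s ∉ S_{p,q}, s > i}`. -/
noncomputable def gapAlpha (p q i : ℤ) : ℕ :=
  Set.ncard {s : ℤ | 0 ≤ s ∧ s ∉ Spq p q ∧ i < s}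

lemma ceil_helper (d m r a : ℤ) (hd : 0 < d) (hr0 : 0 ≤ r) (hrd : r < d)
    (ha : a = d * m - r) : ⌈(a : ℚ) / (d : ℚ)⌉ = m := by
  subst ha
  rw [Int.ceil_eq_iff]
  have hd' : (0 : ℚ) < (d : ℚ) := by exact_mod_cast hd
  have h1 : (r : ℚ) < d := by exact_mod_cast hrd
  have h2 : (0 : ℚ) ≤ r := by exact_mod_cast hr0
  constructor
  · rw [lt_div_iff₀ hd']; push_cast; nlinarith
  · rw [div_le_iff₀ hd']; push_cast; nlinarith

lemma floor_helper (d m r a : ℤ) (hd : 0 < d) (hr0 : 0 ≤ r) (hrd : r < d)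
    (ha : a = d * m + r) : ⌊(a : ℚ) / (d : ℚ)⌋ = m := by
  subst ha
  rw [Int.floor_eq_iff]
  have hd' : (0 : ℚ) < (d : ℚ) := by exact_mod_cast hd
  have h1 : (r : ℚ) < d := by exact_mod_cast hrd
  have h2 : (0 : ℚ) ≤ r := by exact_mod_cast hr0
  constructor
  · rw [le_div_iff₀ hd']; push_cast; nlinarith
  · rw [div_lt_iff₀ hd']; push_cast; nlinarith

lemma pq_sum (p q p' q' u v : ℤ) (hp : 2 ≤ p) (hq : 2 ≤ q) (hpq : IsCoprime p q)
    (hp'0 : 0 < p') (hp'p : p' < p) (hq'0 : 0 < q') (hq'q : q' < q)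
    (hu : q * p' - 1 = p * u) (hv : p * q' - 1 = q * v) :
    q * p' + p * q' = p * q + 1 := by
  have hdp : p ∣ q * p' + p * q' - 1 := ⟨u + q', by linarith [hu]⟩
  have hdq : q ∣ q * p' + p * q' - 1 := ⟨p' + v, by linarith [hv]⟩
  obtain ⟨w, hw⟩ := hpq.mul_dvd hdp hdq
  have h1 : 0 < q * p' + p * q' - 1 := by nlinarith
  have h2 : q * p' + p * q' - 1 < 2 * (p * q) := by nlinarith
  have hpq0 : 0 < p * q := by nlinarith
  have hw1 : w = 1 := by
    rcases lt_trichotomy w 1 with h | h | h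
    · have : w ≤ 0 := by omega
      nlinarith
    · exact h
    · have : 2 ≤ w := by omega
      nlinarith
  rw [hw1] at hw; linarith

lemma keyLemma (p q p' q' u v : ℤ) (hp : 2 ≤ p) (hq : 2 ≤ q) (hpq : IsCoprime p q)
    (hp'0 : 0 < p') (hp'p : p' < p) (hq'0 : 0 < q') (hq'q : q' < q)
    (hu : q * p' - 1 = p * u) (hv : p * q' - 1 = q * v)
    (k : ℤ) (hk0 : 0 ≤ k) (hk1 : k < p * q) :
    (k ∈ Spq p q → q * (k * p' % p) + p * (k * q' % q) = k) ∧
    (k ∉ Spq p q → q * (k * p' % p) + p * (k * q' % q) = k + p * q) := by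
  have hp0 : (0:ℤ) < p := by linarith
  have hq0 : (0:ℤ) < q := by linarith
  set r1 := k * p' % p with hr1
  set r2 := k * q' % q with hr2
  have hr10 : 0 ≤ r1 := Int.emod_nonneg _ (by linarith)
  have hr1p : r1 < p := Int.emod_lt_of_pos _ hp0
  have hr20 : 0 ≤ r2 := Int.emod_nonneg _ (by linarith)
  have hr2q : r2 < q := Int.emod_lt_of_pos _ hq0
  have h1 : k * p' = p * (k * p' / p) + r1 := (Int.mul_ediv_add_emod _ _).symm
  have h2 : k * q' = q * (k * q' / q) + r2 := (Int.mul_ediv_add_emod _ _).symm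
  set d1 := k * p' / p with hd1
  set d2 := k * q' / q with hd2
  clear_value r1 r2 d1 d2
  clear hr1 hr2 hd1 hd2
  have hdp : p ∣ q * r1 + p * r2 - k := ⟨k * u - q * d1 + r2, by linear_combination (-q) * h1 + k * hu⟩
  have hdq : q ∣ q * r1 + p * r2 - k := ⟨k * v - p * d2 + r1, by linear_combination (-p) * h2 + k * hv⟩
  obtain ⟨w, hw⟩ := hpq.mul_dvd hdp hdq
  have hpq0 : 0 < p * q := mul_pos hp0 hq0
  have hub : q * r1 + p * r2 - k < 2 * (p * q) := by nlinarith
  have hlb : -(p * q) < q * r1 + p * r2 - k := by nlinarith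
  have hw01 : w = 0 ∨ w = 1 := by
    rcases lt_trichotomy w 0 with h | h | h
    · have : w ≤ -1 := by omega
      nlinarith
    · left; exact h
    · rcases lt_trichotomy w 1 with h' | h' | h'
      · omega
      · right; exact h'
      · have : 2 ≤ w := by omega
        nlinarith
  constructor
  · intro hS
    rcases hw01 with h | h
    · rw [h] at hw; linarith
    · exfalso
      rw [h] at hw
      obtain ⟨a, b, ha, hb, hab⟩ := hS
      -- q ∣ a - r2
      have hda : q ∣ a - r2 := ⟨d2 - a * v - b * q', by linear_combination h2 - q' * hab - a * hv⟩
      have hdb : p ∣ b - r1 := ⟨d1 - b * u - a * p', by linear_combination h1 - p' * hab - b * hu⟩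
      obtain ⟨s, hs⟩ := hda
      obtain ⟨t, ht⟩ := hdb
      have hs0 : 0 ≤ s := by
        by_contra hc
        push_neg at hc
        linarith [mul_nonneg hq0.le (show (0:ℤ) ≤ -1 - s by omega)]
      have ht0 : 0 ≤ t := by
        by_contra hc
        push_neg at hc
        linarith [mul_nonneg hp0.le (show (0:ℤ) ≤ -1 - t by omega)]
      have har : r2 ≤ a := by linarith [mul_nonneg hq0.le hs0]
      have hbr : r1 ≤ b := by linarith [mul_nonneg hp0.le ht0]
      linarith [mul_le_mul_of_nonneg_right har hp0.le, mul_le_mul_of_nonneg_right hbr hq0.le]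
  · intro hS
    rcases hw01 with h | h
    · exfalso
      rw [h] at hw
      exact hS ⟨r2, r1, hr20, hr10, by linarith⟩
    · rw [h] at hw; linarith

/-- For the tau function of `Σ(p,q,pqn-1)` (coprime `p,q ≥ 2`, `n ≥ 1`): for every
`i ≥ 0` and every `j` with `pqi + 1 ≤ j ≤ pq(i+1)`, if `(i+1)pq - j ∈ S_{p,q}` then
`Δ_j = ⌊jn/(pqn-1)⌋ - i`, and if `(i+1)pq - j ∉ S_{p,q}` then `Δ_j = ⌊jn/(pqn-1)⌋ - i - 1`. -/
theorem brieskornDelta_eq (p q n p' q' : ℤ) (hp : 2 ≤ p) (hq : 2 ≤ q)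
    (hpq : IsCoprime p q) (hn : 1 ≤ n)
    (hp'0 : 0 < p') (hp'p : p' < p) (hq'0 : 0 < q') (hq'q : q' < q)
    (hp' : q * p' ≡ 1 [ZMOD p]) (hq' : p * q' ≡ 1 [ZMOD q])
    (i : ℤ) (hi : 0 ≤ i) (j : ℤ) (hj1 : p * q * i + 1 ≤ j) (hj2 : j ≤ p * q * (i + 1)) :
    ((i + 1) * p * q - j ∈ Spq p q →
      brieskornDelta p q n p' q' j = ⌊(j * n : ℚ) / (p * q * n - 1 : ℚ)⌋ - i) ∧
    ((i + 1) * p * q - j ∉ Spq p q →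
      brieskornDelta p q n p' q' j = ⌊(j * n : ℚ) / (p * q * n - 1 : ℚ)⌋ - i - 1) := by
  have hp0 : (0:ℤ) < p := by linarith
  have hq0 : (0:ℤ) < q := by linarith
  obtain ⟨u, hu⟩ : p ∣ q * p' - 1 := Int.ModEq.dvd hp'.symm
  obtain ⟨v, hv⟩ : q ∣ p * q' - 1 := Int.ModEq.dvd hq'.symm
  have hsum := pq_sum p q p' q' u v hp hq hpq hp'0 hp'p hq'0 hq'q hu hv
  set k := (i + 1) * p * q - j with hk
  have hk0 : 0 ≤ k := by rw [hk]; nlinarith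
  have hk1 : k < p * q := by rw [hk]; nlinarith
  have key := keyLemma p q p' q' u v hp hq hpq hp'0 hp'p hq'0 hq'q hu hv k hk0 hk1
  set N := p * q * n - 1 with hN
  have hN0 : 0 < N := by rw [hN]; nlinarith
  set r1 := k * p' % p with hr1
  set r2 := k * q' % q with hr2
  set r3 := j * n % N with hr3
  have hr10 : 0 ≤ r1 := Int.emod_nonneg _ (by linarith)
  have hr1p : r1 < p := Int.emod_lt_of_pos _ hp0
  have hr20 : 0 ≤ r2 := Int.emod_nonneg _ (by linarith)
  have hr2q : r2 < q := Int.emod_lt_of_pos _ hq0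
  have hr30 : 0 ≤ r3 := Int.emod_nonneg _ (by linarith)
  have hr3N : r3 < N := Int.emod_lt_of_pos _ hN0
  have h1 : k * p' = p * (k * p' / p) + r1 := (Int.mul_ediv_add_emod _ _).symm
  have h2 : k * q' = q * (k * q' / q) + r2 := (Int.mul_ediv_add_emod _ _).symm
  have h3 : j * n = N * (j * n / N) + r3 := (Int.mul_ediv_add_emod _ _).symm
  set d1 := k * p' / p with hd1
  set d2 := k * q' / q with hd2
  set d3 := j * n / N with hd3
  clear_value r1 r2 r3 d1 d2 d3
  clear hr1 hr2 hr3 hd1 hd2 hd3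
  have hc1 : ⌈(j * p' : ℚ) / (p : ℚ)⌉ = q * (i + 1) * p' - d1 := by
    have e : (j * p' : ℚ) = ((j * p' : ℤ) : ℚ) := by push_cast; ring
    rw [e]
    exact ceil_helper p _ r1 _ hp0 hr10 hr1p (by linear_combination -h1 + p' * hk)
  have hc2 : ⌈(j * q' : ℚ) / (q : ℚ)⌉ = p * (i + 1) * q' - d2 := by
    have e : (j * q' : ℚ) = ((j * q' : ℤ) : ℚ) := by push_cast; ring
    rw [e]
    exact ceil_helper q _ r2 _ hq0 hr20 hr2q (by linear_combination -h2 + q' * hk)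
  have hc3 : ⌈(j * (p * q * n - n - 1) : ℚ) / (p * q * n - 1 : ℚ)⌉ = j - d3 := by
    have e : (j * (p * q * n - n - 1) : ℚ) = ((j * (p * q * n - n - 1) : ℤ) : ℚ) := by
      push_cast; ring
    have e2 : (p * q * n - 1 : ℚ) = ((N : ℤ) : ℚ) := by rw [hN]; push_cast; ring
    rw [e, e2]
    exact ceil_helper N _ r3 _ hN0 hr30 hr3N (by linear_combination -h3 - j * hN)
  have hfloor : ⌊(j * n : ℚ) / (p * q * n - 1 : ℚ)⌋ = d3 := by
    have e : (j * n : ℚ) = ((j * n : ℤ) : ℚ) := by push_cast; ring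
    have e2 : (p * q * n - 1 : ℚ) = ((N : ℤ) : ℚ) := by rw [hN]; push_cast; ring
    rw [e, e2]
    exact floor_helper N _ r3 _ hN0 hr30 hr3N h3
  have hpqne : (p * q : ℤ) ≠ 0 := (mul_pos hp0 hq0).ne'
  constructor
  · intro hS
    have hkey := key.1 hS
    have hdd : p * q * (d1 + d2) = p * q * k := by
      linear_combination (-q) * h1 + (-p) * h2 - hkey + k * hsum
    have hddk : d1 + d2 = k := mul_left_cancel₀ hpqne hdd
    unfold brieskornDelta
    rw [hc1, hc2, hc3, hfloor]
    linear_combination hddk - (i + 1) * hsum - hk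
  · intro hS
    have hkey := key.2 hS
    have hdd : p * q * (d1 + d2) = p * q * (k - 1) := by
      linear_combination (-q) * h1 + (-p) * h2 - hkey + k * hsum
    have hddk : d1 + d2 = k - 1 := mul_left_cancel₀ hpqne hdd
    unfold brieskornDelta
    rw [hc1, hc2, hc3, hfloor]
    linear_combination hddk - (i + 1) * hsum - hk
end

section
/- Let p,q ≥ 2 be coprime integers, n ≥ 1 an integer, and let τ be the tau function of Σ(p,q,pqn-1). Then: (a) for every i with 0 ≤ i ≤ N-2 and every integer j with m_i ≤ j < M_i, τ(j+1) ≥ τ(j); (b) for every i with 0 ≤ i ≤ N-2 and every integer j with M_i ≤ j < m_{i+1}, τ(j+1) ≤ τ(j); and (c) for every integer j ≥ m_{N-1}, τ(j+1) ≥ τ(j). In particular τ attains its local maxima at the points M_i (0 ≤ i ≤ N-2) and its local minima at the points m_i (0 ≤ i ≤ N-1). -/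
private lemma floor_int_div (a b : ℤ) (hb : 0 < b) : ⌊(a : ℚ) / (b : ℚ)⌋ = a / b := by
  have h : ((b.toNat : ℕ) : ℚ) = (b : ℚ) := by
    exact_mod_cast congrArg (Int.cast : ℤ → ℚ) (Int.toNat_of_nonneg hb.le)
  rw [← h, Rat.floor_intCast_div_natCast, Int.toNat_of_nonneg hb.le]

private lemma ceil_int_div (a b : ℤ) (hb : 0 < b) : ⌈(a : ℚ) / (b : ℚ)⌉ = -((-a) / b) := by
  have hf : ⌊((-a : ℤ) : ℚ) / (b : ℚ)⌋ = (-a) / b := floor_int_div (-a) b hb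
  rw [Int.cast_neg, neg_div, Int.floor_neg] at hf
  omega

/-- Key closed form: `Δ_j = 1 + ⌊jn/(pqn-1)⌋ - s_j/(pq)` where
`s_j = j + x_j q + y_j p`, `x_j = (-jp') mod p`, `y_j = (-jq') mod q`. -/
private lemma delta_formula (p q n p' q' : ℤ) (hp : 2 ≤ p) (hq : 2 ≤ q) (hn : 1 ≤ n)
    (hS : q * p' + p * q' = p * q + 1) (j : ℤ) :
    brieskornDelta p q n p' q' j
      = 1 + (j * n) / (p * q * n - 1)
        - (j + ((-(j * p')) % p) * q + ((-(j * q')) % q) * p) / (p * q) := by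
  have hp0 : (0:ℤ) < p := by linarith
  have hq0 : (0:ℤ) < q := by linarith
  have hpq0 : (0:ℤ) < p * q := by positivity
  have ha : (0:ℤ) < p * q * n - 1 := by nlinarith
  have h1 : ⌈((j : ℚ) * (p' : ℚ)) / (p : ℚ)⌉ = -((-(j * p')) / p) := by
    rw [show ((j : ℚ) * (p' : ℚ)) = (((j * p' : ℤ)) : ℚ) by push_cast; ring,
      ceil_int_div _ _ hp0]
  have h2 : ⌈((j : ℚ) * (q' : ℚ)) / (q : ℚ)⌉ = -((-(j * q')) / q) := by
    rw [show ((j : ℚ) * (q' : ℚ)) = (((j * q' : ℤ)) : ℚ) by push_cast; ring,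
      ceil_int_div _ _ hq0]
  have h3 : ⌈((j : ℚ) * ((p : ℚ) * (q : ℚ) * (n : ℚ) - (n : ℚ) - 1)) / ((p : ℚ) * (q : ℚ) * (n : ℚ) - 1)⌉
      = j - (j * n) / (p * q * n - 1) := by
    rw [show ((j : ℚ) * ((p : ℚ) * (q : ℚ) * (n : ℚ) - (n : ℚ) - 1))
          = (((j * (p * q * n - n - 1) : ℤ)) : ℚ) by push_cast; ring,
      show ((p : ℚ) * (q : ℚ) * (n : ℚ) - 1) = (((p * q * n - 1 : ℤ)) : ℚ) by push_cast; ring,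
      ceil_int_div _ _ ha]
    have e : -(j * (p * q * n - n - 1)) = j * n + (p * q * n - 1) * (-j) := by ring
    rw [e, Int.add_mul_ediv_left _ _ (by omega : (p * q * n - 1 : ℤ) ≠ 0)]
    ring
  have hx : (-(j * p')) % p = -(j * p') - p * ((-(j * p')) / p) := Int.emod_def _ _
  have hy : (-(j * q')) % q = -(j * q') - q * ((-(j * q')) / q) := Int.emod_def _ _
  have hs : j + ((-(j * p')) % p) * q + ((-(j * q')) % q) * p
      = (p * q) * (-(j + (-(j * p')) / p + (-(j * q')) / q)) := by
    rw [hx, hy]; linear_combination (-j) * hS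
  have hsd : (j + ((-(j * p')) % p) * q + ((-(j * q')) % q) * p) / (p * q)
      = -(j + (-(j * p')) / p + (-(j * q')) / q) := by
    rw [hs, Int.mul_ediv_cancel_left _ (ne_of_gt hpq0)]
  unfold brieskornDelta
  rw [h1, h2, h3, hsd]
  ring

private lemma s_mul (p q p' q' : ℤ) (hS : q * p' + p * q' = p * q + 1) (j : ℤ) :
    ∃ k : ℤ, j + ((-(j * p')) % p) * q + ((-(j * q')) % q) * p = p * q * k := by
  refine ⟨-(j + (-(j * p')) / p + (-(j * q')) / q), ?_⟩
  rw [Int.emod_def, Int.emod_def]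
  linear_combination (-j) * hS

private lemma tau_step (p q n p' q' : ℤ) (j : ℤ) (hj : 0 ≤ j) :
    brieskornTau p q n p' q' (j + 1)
      = brieskornTau p q n p' q' j + brieskornDelta p q n p' q' j := by
  unfold brieskornTau
  have h : (j + 1).toNat = j.toNat + 1 := by omega
  rw [h, Finset.sum_range_succ, Int.toNat_of_nonneg hj]

set_option maxHeartbeats 1000000 in
/-- For the tau function `τ` of `Σ(p,q,pqn-1)` (coprime `p,q ≥ 2`, `n ≥ 1`),
with `g = (p-1)(q-1)/2`, `N = n(2g-1)`, `M_i = pqi + 1` and `m_i = pqi - ⌊i/n⌋`: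
(a) `τ` is nondecreasing on each `[m_i, M_i]` for `0 ≤ i ≤ N-2`;
(b) `τ` is nonincreasing on each `[M_i, m_{i+1}]` for `0 ≤ i ≤ N-2`;
(c) `τ` is nondecreasing on `[m_{N-1}, ∞)`.
In particular `τ` attains its local maxima at the `M_i` and local minima at the `m_i`. -/
theorem brieskornTau_extrema (p q n p' q' : ℤ) (hp : 2 ≤ p) (hq : 2 ≤ q)
    (hpq : IsCoprime p q) (hn : 1 ≤ n)
    (hp'0 : 0 < p') (hp'p : p' < p) (hq'0 : 0 < q') (hq'q : q' < q)
    (hp' : q * p' ≡ 1 [ZMOD p]) (hq' : p * q' ≡ 1 [ZMOD q])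
    (g : ℤ) (hg : 2 * g = (p - 1) * (q - 1)) :
    (∀ i : ℤ, 0 ≤ i → i ≤ n * (2 * g - 1) - 2 →
      ∀ j : ℤ, p * q * i - i / n ≤ j → j < p * q * i + 1 →
        brieskornTau p q n p' q' j ≤ brieskornTau p q n p' q' (j + 1)) ∧
    (∀ i : ℤ, 0 ≤ i → i ≤ n * (2 * g - 1) - 2 →
      ∀ j : ℤ, p * q * i + 1 ≤ j → j < p * q * (i + 1) - (i + 1) / n →
        brieskornTau p q n p' q' (j + 1) ≤ brieskornTau p q n p' q' j) ∧
    (∀ j : ℤ, p * q * (n * (2 * g - 1) - 1) - (n * (2 * g - 1) - 1) / n ≤ j →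
        brieskornTau p q n p' q' j ≤ brieskornTau p q n p' q' (j + 1)) := by
  have hp0 : (0:ℤ) < p := by linarith
  have hq0 : (0:ℤ) < q := by linarith
  have hn0 : (0:ℤ) < n := by linarith
  have hpq0 : (0:ℤ) < p * q := by positivity
  have hpq4 : (4:ℤ) ≤ p * q := by nlinarith
  have ha : (0:ℤ) < p * q * n - 1 := by
    nlinarith [mul_le_mul_of_nonneg_right hpq4 hn0.le]
  have hg1 : (1:ℤ) ≤ g := by
    have h2g : (0:ℤ) < 2 * g := by
      rw [hg]; exact mul_pos (by linarith) (by linarith)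
    omega
  -- the key congruence fact: q*p' + p*q' = p*q + 1
  have hS : q * p' + p * q' = p * q + 1 := by
    have d1 : p ∣ q * p' - 1 := by
      obtain ⟨c, hc⟩ := Int.ModEq.dvd hp'
      exact ⟨-c, by linarith⟩
    have d2 : q ∣ p * q' - 1 := by
      obtain ⟨c, hc⟩ := Int.ModEq.dvd hq'
      exact ⟨-c, by linarith⟩
    have d1' : p ∣ (q * p' + p * q') - 1 := by
      obtain ⟨c, hc⟩ := d1; exact ⟨c + q', by linarith⟩
    have d2' : q ∣ (q * p' + p * q') - 1 := by
      obtain ⟨c, hc⟩ := d2; exact ⟨c + p', by linarith⟩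
    obtain ⟨c, hc⟩ := hpq.mul_dvd d1' d2'
    have hb1 : q * 1 ≤ q * p' := by nlinarith
    have hb2 : q * p' ≤ q * (p - 1) := by nlinarith
    have hb3 : p * 1 ≤ p * q' := by nlinarith
    have hb4 : p * q' ≤ p * (q - 1) := by nlinarith
    have hc1 : 1 ≤ c := by nlinarith
    have hc2 : c ≤ 1 := by nlinarith
    have : c = 1 := le_antisymm hc2 hc1
    rw [this] at hc; linarith
  refine ⟨?_, ?_, ?_⟩
  · -- part (a)
    intro i hi0 hi2 j hj1 hj2
    have hdn : i / n ≤ i := Int.ediv_le_self n hi0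
    have hj0 : 0 ≤ j := by
      nlinarith [mul_le_mul_of_nonneg_right (by linarith : (1:ℤ) ≤ p * q) hi0]
    rw [tau_step _ _ _ _ _ j hj0]
    suffices h : 0 ≤ brieskornDelta p q n p' q' j by linarith
    rw [delta_formula p q n p' q' hp hq hn hS j]
    obtain ⟨k, hk⟩ := s_mul p q p' q' hS j
    rw [hk, Int.mul_ediv_cancel_left _ (ne_of_gt hpq0)]
    have hx0 : 0 ≤ (-(j * p')) % p := Int.emod_nonneg _ (by omega)
    have hx1 : (-(j * p')) % p < p := Int.emod_lt_of_pos _ hp0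
    have hy0 : 0 ≤ (-(j * q')) % q := Int.emod_nonneg _ (by omega)
    have hy1 : (-(j * q')) % q < q := Int.emod_lt_of_pos _ hq0
    -- k ≤ i + 1
    have hklt : p * q * k < p * q * (i + 2) := by
      have b1 : ((-(j * p')) % p) * q ≤ (p - 1) * q :=
        mul_le_mul_of_nonneg_right (by omega) hq0.le
      have b2 : ((-(j * q')) % q) * p ≤ (q - 1) * p :=
        mul_le_mul_of_nonneg_right (by omega) hp0.le
      linarith [hk, b1, b2]
    have hki : k ≤ i + 1 := by
      have := lt_of_mul_lt_mul_left hklt hpq0.le; omega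
    -- i ≤ (j*n)/(pqn-1)
    have hjn : i ≤ (j * n) / (p * q * n - 1) := by
      rw [Int.le_ediv_iff_mul_le ha]
      have hd : n * (i / n) + i % n = i := Int.mul_ediv_add_emod i n
      have hdm : 0 ≤ i % n := Int.emod_nonneg i (by omega)
      linarith [mul_le_mul_of_nonneg_right hj1 hn0.le]
    linarith
  · -- part (b)
    intro i hi0 hi2 j hj1 hj2
    have hj0 : 0 ≤ j := by
      nlinarith [mul_nonneg hpq0.le hi0]
    rw [tau_step _ _ _ _ _ j hj0]
    suffices h : brieskornDelta p q n p' q' j ≤ 0 by linarith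
    rw [delta_formula p q n p' q' hp hq hn hS j]
    obtain ⟨k, hk⟩ := s_mul p q p' q' hS j
    rw [hk, Int.mul_ediv_cancel_left _ (ne_of_gt hpq0)]
    have hx0 : 0 ≤ (-(j * p')) % p := Int.emod_nonneg _ (by omega)
    have hy0 : 0 ≤ (-(j * q')) % q := Int.emod_nonneg _ (by omega)
    -- i + 1 ≤ k
    have hklt : p * q * i < p * q * k := by
      have b1 : 0 ≤ ((-(j * p')) % p) * q := mul_nonneg hx0 hq0.le
      have b2 : 0 ≤ ((-(j * q')) % q) * p := mul_nonneg hy0 hp0.le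
      linarith [hk, b1, b2]
    have hki : i + 1 ≤ k := by
      have := lt_of_mul_lt_mul_left hklt hpq0.le; omega
    -- (j*n)/(pqn-1) ≤ i
    have hjn : (j * n) / (p * q * n - 1) ≤ i := by
      have hlt : (j * n) / (p * q * n - 1) < i + 1 := by
        rw [Int.ediv_lt_iff_lt_mul ha]
        have hd : n * ((i + 1) / n) + (i + 1) % n = i + 1 := Int.mul_ediv_add_emod (i + 1) n
        have hdm : (i + 1) % n < n := Int.emod_lt_of_pos (i + 1) hn0
        linarith [mul_le_mul_of_nonneg_right (by linarith : j ≤ p * q * (i + 1) - (i + 1) / n - 1) hn0.le]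
      omega
    linarith
  · -- part (c)
    intro j hj
    have hNdiv : (n * (2 * g - 1) - 1) / n = 2 * g - 2 := by
      rw [show n * (2 * g - 1) - 1 = (n - 1) + n * (2 * g - 2) by ring,
        Int.add_mul_ediv_left _ _ (by omega : n ≠ 0),
        Int.ediv_eq_zero_of_lt (by omega) (by omega)]
      ring
    rw [hNdiv] at hj
    have H3 : 0 ≤ (n - 1) * (2 * g - 1) :=
      mul_nonneg (by linarith) (by linarith)
    have hN1 : 0 ≤ n * (2 * g - 1) - 1 := by linarith [H3]
    have hj0 : 0 ≤ j := by
      linarith [mul_le_mul_of_nonneg_right (by linarith : (1:ℤ) ≤ p * q) hN1, H3]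
    rw [tau_step _ _ _ _ _ j hj0]
    suffices h : 0 ≤ brieskornDelta p q n p' q' j by linarith
    rw [delta_formula p q n p' q' hp hq hn hS j]
    obtain ⟨k, hk⟩ := s_mul p q p' q' hS j
    rw [hk, Int.mul_ediv_cancel_left _ (ne_of_gt hpq0)]
    have hx0 : 0 ≤ (-(j * p')) % p := Int.emod_nonneg _ (by omega)
    have hx1 : (-(j * p')) % p < p := Int.emod_lt_of_pos _ hp0
    have hy0 : 0 ≤ (-(j * q')) % q := Int.emod_nonneg _ (by omega)
    have hy1 : (-(j * q')) % q < q := Int.emod_lt_of_pos _ hq0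
    set x := (-(j * p')) % p with hxdef
    set y := (-(j * q')) % q with hydef
    -- suffices: k ≤ 1 + (j*n)/(pqn-1), i.e. (k-1)*(pqn-1) ≤ j*n
    suffices hkey : n * (x * q + y * p) - n * (p * q) + 1 ≤ k by
      have hjneq : j * n = p * q * n * k - n * (x * q + y * p) := by
        linear_combination n * hk
      have h2 : (k - 1) * (p * q * n - 1) ≤ j * n := by nlinarith [hkey, hjneq]
      have h3 : k - 1 ≤ (j * n) / (p * q * n - 1) :=
        (Int.le_ediv_iff_mul_le ha).mpr h2
      linarith
    by_cases hcase : x * q + y * p ≤ p * q - 1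
    · -- then RHS ≤ 1 - n ≤ 0 ≤ k
      have hk0 : 0 ≤ k := by
        have hs0 : 0 ≤ p * q * k := by
          rw [← hk]; positivity
        by_contra hcon
        push_neg at hcon
        have : p * q * k ≤ p * q * (-1) := by
          apply mul_le_mul_of_nonneg_left (by omega) hpq0.le
        linarith
      linarith [mul_le_mul_of_nonneg_left hcase hn0.le]
    · push_neg at hcase
      have ht0 : p * q ≤ x * q + y * p := by linarith
      have ht1 : x * q + y * p - p * q ≤ 2 * g - 1 := by
        have b1 := mul_le_mul_of_nonneg_right (by omega : x ≤ p - 1) hq0.le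
        have b2 := mul_le_mul_of_nonneg_right (by omega : y ≤ q - 1) hp0.le
        linarith [b1, b2, hg]
      set t := x * q + y * p - p * q with htdef
      have hkt : p * q * k = j + p * q + t := by rw [← hk]; ring
      have hnt : n * t = n * (x * q + y * p) - n * (p * q) := by
        rw [htdef]; ring
      by_cases ht2 : t = 2 * g - 1
      · have h5 : p * q * (n * t) < p * q * k := by
          rw [hkt, ht2]
          linarith [hj]
        have := lt_of_mul_lt_mul_left h5 hpq0.le
        linarith [hnt]
      · have ht3 : t ≤ 2 * g - 2 := by omega
        have h6 : p * q * (n * t + 1) ≤ p * q * k := by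
          rw [hkt]
          nlinarith [hj, mul_nonneg (mul_nonneg (by linarith : (0:ℤ) ≤ n - 1) hpq0.le)
              (by linarith : (0:ℤ) ≤ 2 * g - 1 - t),
            mul_nonneg (by linarith : (0:ℤ) ≤ p * q - 1)
              (by linarith : (0:ℤ) ≤ 2 * g - 2 - t)]
        have := le_of_mul_le_mul_left h6 hpq0
        linarith [hnt]
end

section
/- Let p,q ≥ 2 be coprime integers, n ≥ 1 an integer, and let τ be the tau function of Σ(p,q,pqn-1). Then for every i with 0 ≤ i ≤ N-2, τ(M_i) - τ(m_i) = #{s ∈ S_{p,q} : s ≤ ⌊i/n⌋}, and this quantity is strictly positive. -/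
private lemma ceil_shift (a b c : ℤ) (hb : 0 < b) :
    ⌈((b * c - a : ℤ) : ℚ) / (b : ℚ)⌉ = c - a / b := by
  have hb' : (b : ℚ) ≠ 0 := by exact_mod_cast hb.ne'
  have h1 : ((b * c - a : ℤ) : ℚ) / (b : ℚ) = ((-a : ℤ) : ℚ) / (b : ℚ) + (c : ℤ) := by
    push_cast
    field_simp
    ring
  rw [h1, Int.ceil_add_intCast]
  have h2 : ((-a : ℤ) : ℚ) / (b : ℚ) = -((a : ℚ) / (b : ℚ)) := by push_cast; ring
  rw [h2, Int.ceil_neg, floor_int_div a b hb]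
  ring

private lemma key_id (p q p' q' : ℤ) (hp : 2 ≤ p) (hq : 2 ≤ q) (hpq : IsCoprime p q)
    (hp'0 : 0 < p') (hp'p : p' < p) (hq'0 : 0 < q') (hq'q : q' < q)
    (hp' : q * p' ≡ 1 [ZMOD p]) (hq' : p * q' ≡ 1 [ZMOD q]) :
    q * p' + p * q' = p * q + 1 := by
  have hp0 : (0:ℤ) < p := by linarith
  have hq0 : (0:ℤ) < q := by linarith
  obtain ⟨k1, hk1⟩ := hp'.dvd
  obtain ⟨k2, hk2⟩ := hq'.dvd
  have h1 : p ∣ (q * p' + p * q') - 1 := ⟨q' - k1, by linear_combination -hk1⟩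
  have h2 : q ∣ (q * p' + p * q') - 1 := ⟨p' - k2, by linear_combination -hk2⟩
  obtain ⟨k, hk⟩ := hpq.mul_dvd h1 h2
  have hb1 : q * 1 ≤ q * p' := by
    apply mul_le_mul_of_nonneg_left (by linarith) (by linarith)
  have hb2 : p * 1 ≤ p * q' := by
    apply mul_le_mul_of_nonneg_left (by linarith) (by linarith)
  have hb3 : q * p' ≤ q * (p - 1) := by
    apply mul_le_mul_of_nonneg_left (by linarith) (by linarith)
  have hb4 : p * q' ≤ p * (q - 1) := by
    apply mul_le_mul_of_nonneg_left (by linarith) (by linarith)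
  have hk1' : p * q * 0 < p * q * k := by nlinarith
  have hk2' : p * q * k < p * q * 2 := by nlinarith
  have hpq0 : (0:ℤ) < p * q := by nlinarith
  have h0k : 0 < k := lt_of_mul_lt_mul_left hk1' hpq0.le
  have hk2'' : k < 2 := lt_of_mul_lt_mul_left hk2' hpq0.le
  have : k = 1 := by omega
  subst this
  linarith


private lemma spq_nonneg {p q : ℤ} (hp : 0 < p) (hq : 0 < q) {s : ℤ} (hs : s ∈ Spq p q) :
    0 ≤ s := by
  obtain ⟨a, b, ha, hb, rfl⟩ := hs
  have h1 := mul_nonneg ha hp.le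
  have h2 := mul_nonneg hb hq.le
  linarith

private lemma delta_at (p q n p' q' i s : ℤ) (hp : 2 ≤ p) (hq : 2 ≤ q) (hn : 1 ≤ n)
    (hkey : q * p' + p * q' = p * q + 1)
    (hs0 : 0 ≤ s) (hsn : s * n ≤ i) (hir : i < p * q * n - 1) :
    brieskornDelta p q n p' q' (p * q * i - s)
      = 1 - s + s * p' / p + s * q' / q := by
  have hp0 : (0:ℤ) < p := by linarith
  have hq0 : (0:ℤ) < q := by linarith
  have hn0 : (0:ℤ) < n := by linarith
  have hr0 : (0:ℤ) < p * q * n - 1 := by nlinarith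
  unfold brieskornDelta
  have e1 : ((p * q * i - s : ℤ) : ℚ) * (p' : ℚ) / (p : ℚ)
      = ((p * (q * i * p') - s * p' : ℤ) : ℚ) / (p : ℚ) := by push_cast; ring
  have e2 : ((p * q * i - s : ℤ) : ℚ) * (q' : ℚ) / (q : ℚ)
      = ((q * (p * i * q') - s * q' : ℤ) : ℚ) / (q : ℚ) := by push_cast; ring
  have e3 : ((p * q * i - s : ℤ) : ℚ) * ((p : ℚ) * (q : ℚ) * (n : ℚ) - (n : ℚ) - 1)
        / ((p : ℚ) * (q : ℚ) * (n : ℚ) - 1)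
      = (((p * q * n - 1) * (p * q * i - s - i) - (i - s * n) : ℤ) : ℚ)
        / ((p * q * n - 1 : ℤ) : ℚ) := by
    have hr' : ((p * q * n - 1 : ℤ) : ℚ) ≠ 0 := by exact_mod_cast hr0.ne'
    push_cast at hr' ⊢
    field_simp
    ring
  rw [e1, e2, e3, ceil_shift _ _ _ hp0, ceil_shift _ _ _ hq0, ceil_shift _ _ _ hr0]
  have hz : (i - s * n) / (p * q * n - 1) = 0 := by
    apply Int.ediv_eq_zero_of_lt (by linarith)
    have : 0 ≤ s * n := mul_nonneg hs0 hn0.le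
    linarith
  rw [hz]
  linear_combination (-i) * hkey

private lemma delta_indicator (p q p' q' : ℤ) (hp : 2 ≤ p) (hq : 2 ≤ q)
    (hkey : q * p' + p * q' = p * q + 1)
    (s : ℤ) (hs0 : 0 ≤ s) (hspq : s < p * q) [Decidable (s ∈ Spq p q)] :
    1 - s + s * p' / p + s * q' / q = if s ∈ Spq p q then 1 else 0 := by
  have hp0 : (0:ℤ) < p := by linarith
  have hq0 : (0:ℤ) < q := by linarith
  set b := s * p' % p with hbdef
  set A := s * p' / p with hAdef
  have hbA : p * A + b = s * p' := Int.mul_ediv_add_emod _ _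
  have hb0 : 0 ≤ b := Int.emod_nonneg _ hp0.ne'
  have hbp : b < p := Int.emod_lt_of_pos _ hp0
  set c := s * q' % q with hcdef
  set B := s * q' / q with hBdef
  have hcB : q * B + c = s * q' := Int.mul_ediv_add_emod _ _
  have hc0 : 0 ≤ c := Int.emod_nonneg _ hq0.ne'
  have hcq : c < q := Int.emod_lt_of_pos _ hq0
  set a1 : ℤ := s * q' - s * q + q * A with ha1def
  have ha1 : s - q * b = p * a1 := by
    rw [ha1def]
    linear_combination (-q) * hbA - s * hkey
  have hK : q * (A + B - s) = a1 - c := by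
    have h' : p * (q * (A + B - s)) = p * (a1 - c) := by
      rw [ha1def]
      linear_combination p * hcB
    exact mul_left_cancel₀ hp0.ne' h'
  have hqb : q * b ≤ q * (p - 1) := mul_le_mul_of_nonneg_left (by linarith) hq0.le
  have ha1q : a1 < q := by
    have h' : p * a1 < p * q := by nlinarith
    exact lt_of_mul_lt_mul_left h' hp0.le
  have ha1q' : -q < a1 := by
    have h' : p * (-q) < p * a1 := by nlinarith
    exact lt_of_mul_lt_mul_left h' hp0.le
  by_cases hmem : s ∈ Spq p q
  · rw [if_pos hmem]
    obtain ⟨a0, b0, ha0, hb0', hs⟩ := hmem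
    set m : ℤ := b0 * q' - b0 * q - a0 * p' + A with hmdef
    have hm : b0 - b = p * m := by
      rw [hmdef]
      linear_combination (-1) * hbA - p' * hs - b0 * hkey
    have hpm1 : p * (-1) = -p := by ring
    have hm1 : p * (-1) < p * m := by linarith
    have hm0 : (-1:ℤ) < m := lt_of_mul_lt_mul_left hm1 hp0.le
    have hm0' : (0:ℤ) ≤ m := by omega
    have hpm0 : 0 ≤ p * m := mul_nonneg hp0.le hm0'
    have hbb0 : b ≤ b0 := by linarith
    have hqbb : q * b ≤ q * b0 := mul_le_mul_of_nonneg_left hbb0 hq0.le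
    have ha0p : 0 ≤ a0 * p := mul_nonneg ha0 hp0.le
    have hp0' : p * 0 = 0 := by ring
    have ha10 : p * 0 ≤ p * a1 := by linarith
    have ha10' : (0:ℤ) ≤ a1 := le_of_mul_le_mul_left ha10 hp0
    have hq1 : q * 1 = q := by ring
    have hqm1 : q * (-1) = -q := by ring
    have hKlt : q * (A + B - s) < q * 1 := by linarith
    have hKgt : q * (-1) < q * (A + B - s) := by linarith
    have h1 := lt_of_mul_lt_mul_left hKlt hq0.le
    have h2 := lt_of_mul_lt_mul_left hKgt hq0.le
    have : A + B - s = 0 := by omega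
    linarith
  · rw [if_neg hmem]
    have ha1n : a1 < 0 := by
      by_contra h
      push_neg at h
      exact hmem ⟨a1, b, h, hb0, by linarith [mul_comm a1 p, mul_comm b q]⟩
    have hq00 : q * 0 = 0 := by ring
    have hqm2 : q * (-2) = -(2 * q) := by ring
    have hKlt : q * (A + B - s) < q * 0 := by linarith
    have hKgt : q * (-2) < q * (A + B - s) := by linarith
    have h1 := lt_of_mul_lt_mul_left hKlt hq0.le
    have h2 := lt_of_mul_lt_mul_left hKgt hq0.le
    have : A + B - s = -1 := by omega
    linarith

private lemma tau_sub (p q n p' q' : ℤ) (a b : ℤ) (ha : 0 ≤ a) (hab : a ≤ b) :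
    brieskornTau p q n p' q' b - brieskornTau p q n p' q' a
      = ∑ j ∈ Finset.Ico a b, brieskornDelta p q n p' q' j := by
  have key : ∀ k : ℤ, brieskornTau p q n p' q' k
      = ∑ j ∈ Finset.Ico (0:ℤ) k, brieskornDelta p q n p' q' j := by
    intro k
    unfold brieskornTau
    apply Finset.sum_nbij' (fun m : ℕ => (m : ℤ)) (fun z : ℤ => z.toNat)
    · intro m hm
      simp only [Finset.mem_range] at hm
      simp only [Finset.mem_Ico]
      omega
    · intro z hz
      simp only [Finset.mem_Ico] at hz
      simp only [Finset.mem_range]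
      omega
    · intro m _
      simp
    · intro z hz
      simp only [Finset.mem_Ico] at hz
      omega
    · intro m _
      rfl
  rw [key a, key b]
  have hu : Finset.Ico (0:ℤ) a ∪ Finset.Ico a b = Finset.Ico 0 b :=
    Finset.Ico_union_Ico_eq_Ico ha hab
  have hd : Disjoint (Finset.Ico (0:ℤ) a) (Finset.Ico a b) :=
    Finset.Ico_disjoint_Ico_consecutive 0 a b
  rw [← hu, Finset.sum_union hd]
  ring

/-- For the tau function `τ` of `Σ(p,q,pqn-1)` (coprime `p,q ≥ 2`, `n ≥ 1`), with
`g = (p-1)(q-1)/2`, `N = n(2g-1)`, `M_i = pqi + 1` and `m_i = pqi - ⌊i/n⌋`: for every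
`0 ≤ i ≤ N-2`, `τ(M_i) - τ(m_i) = #{s ∈ S_{p,q} : s ≤ ⌊i/n⌋}`, and this is positive. -/
theorem brieskornTau_branch_up (p q n p' q' : ℤ) (hp : 2 ≤ p) (hq : 2 ≤ q)
    (hpq : IsCoprime p q) (hn : 1 ≤ n)
    (hp'0 : 0 < p') (hp'p : p' < p) (hq'0 : 0 < q') (hq'q : q' < q)
    (hp' : q * p' ≡ 1 [ZMOD p]) (hq' : p * q' ≡ 1 [ZMOD q])
    (g : ℤ) (hg : 2 * g = (p - 1) * (q - 1))
    (i : ℤ) (hi0 : 0 ≤ i) (hiN : i ≤ n * (2 * g - 1) - 2) :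
    brieskornTau p q n p' q' (p * q * i + 1) - brieskornTau p q n p' q' (p * q * i - i / n)
      = (Set.ncard {s : ℤ | s ∈ Spq p q ∧ s ≤ i / n} : ℤ) ∧
    0 < Set.ncard {s : ℤ | s ∈ Spq p q ∧ s ≤ i / n} := by
  classical
  have hp0 : (0:ℤ) < p := by linarith
  have hq0 : (0:ℤ) < q := by linarith
  have hn0 : (0:ℤ) < n := by linarith
  have hkey : q * p' + p * q' = p * q + 1 :=
    key_id p q p' q' hp hq hpq hp'0 hp'p hq'0 hq'q hp' hq'
  set t := i / n with ht
  have hdiv : n * t + i % n = i := Int.mul_ediv_add_emod i n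
  have hmod0 : 0 ≤ i % n := Int.emod_nonneg i hn0.ne'
  have hmodn : i % n < n := Int.emod_lt_of_pos i hn0
  have h0t : 0 ≤ t := Int.ediv_nonneg hi0 hn0.le
  have hti : t ≤ i := by nlinarith
  have htg : t ≤ 2 * g - 2 := by
    have h1 : n * t < n * (2 * g - 1) := by linarith
    have h2 : t < 2 * g - 1 := lt_of_mul_lt_mul_left h1 hn0.le
    linarith
  have htpq : t < p * q := by nlinarith
  have hir : i < p * q * n - 1 := by nlinarith
  have hm0 : 0 ≤ p * q * i - t := by nlinarith
  have hmM : p * q * i - t ≤ p * q * i + 1 := by linarith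
  -- Step A : the difference of tau is a sum over an interval
  have hA : brieskornTau p q n p' q' (p * q * i + 1)
        - brieskornTau p q n p' q' (p * q * i - t)
      = ∑ j ∈ Finset.Ico (p * q * i - t) (p * q * i + 1), brieskornDelta p q n p' q' j :=
    tau_sub p q n p' q' _ _ hm0 hmM
  -- Step B : reindex by s = p*q*i - j
  have hB : ∑ j ∈ Finset.Ico (p * q * i - t) (p * q * i + 1), brieskornDelta p q n p' q' j
      = ∑ s ∈ Finset.Icc (0:ℤ) t, brieskornDelta p q n p' q' (p * q * i - s) := by
    apply Finset.sum_nbij' (fun j : ℤ => p * q * i - j) (fun s : ℤ => p * q * i - s)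
    · intro a ha
      simp only [Finset.mem_Ico] at ha
      simp only [Finset.mem_Icc]
      omega
    · intro a ha
      simp only [Finset.mem_Icc] at ha
      simp only [Finset.mem_Ico]
      omega
    · intro a _
      ring
    · intro a _
      ring
    · intro a _
      congr 1
      ring
  -- Step C : each summand is the indicator of the semigroup
  have hC : ∀ s ∈ Finset.Icc (0:ℤ) t,
      brieskornDelta p q n p' q' (p * q * i - s)
        = if s ∈ Spq p q then (1:ℤ) else 0 := by
    intro s hs
    rw [Finset.mem_Icc] at hs
    have hsn : s * n ≤ i := by
      have h1 : s * n ≤ t * n := mul_le_mul_of_nonneg_right hs.2 hn0.le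
      nlinarith
    rw [delta_at p q n p' q' i s hp hq hn hkey hs.1 hsn hir]
    exact delta_indicator p q p' q' hp hq hkey s hs.1 (lt_of_le_of_lt hs.2 htpq)
  -- the set as a finset
  have hset : {s : ℤ | s ∈ Spq p q ∧ s ≤ t}
      = (((Finset.Icc (0:ℤ) t).filter (fun s => s ∈ Spq p q)) : Set ℤ) := by
    ext x
    simp only [Set.mem_setOf_eq, Finset.coe_filter, Finset.mem_Icc]
    constructor
    · rintro ⟨hx, hxt⟩
      exact ⟨⟨spq_nonneg hp0 hq0 hx, hxt⟩, hx⟩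
    · rintro ⟨⟨_, hxt⟩, hx⟩
      exact ⟨hx, hxt⟩
  have hcard : {s : ℤ | s ∈ Spq p q ∧ s ≤ t}.ncard
      = ((Finset.Icc (0:ℤ) t).filter (fun s => s ∈ Spq p q)).card := by
    rw [hset, Set.ncard_coe_finset]
  have hsum : ∑ s ∈ Finset.Icc (0:ℤ) t, (if s ∈ Spq p q then (1:ℤ) else 0)
      = (((Finset.Icc (0:ℤ) t).filter (fun s => s ∈ Spq p q)).card : ℤ) :=
    Finset.sum_boole _ _
  constructor
  · rw [hA, hB, Finset.sum_congr rfl hC, hsum, hcard]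
  · rw [hcard]
    rw [Finset.card_pos]
    refine ⟨0, Finset.mem_filter.mpr ⟨Finset.mem_Icc.mpr ⟨le_refl 0, h0t⟩, ?_⟩⟩
    exact ⟨0, 0, le_refl 0, le_refl 0, by ring⟩
end

section
/- Let p,q ≥ 2 be coprime integers, n ≥ 1 an integer, and let τ be the tau function of Σ(p,q,pqn-1). Then τ(m_{i+1}) - τ(m_i) ≤ 0 for 0 ≤ i ≤ n(g-1) - 1, τ(m_{i+1}) - τ(m_i) = 0 for n(g-1) ≤ i ≤ ng - 2, and τ(m_{i+1}) - τ(m_i) ≥ 0 for ng - 1 ≤ i ≤ N - 2. Consequently, for every i with n(g-1) ≤ i ≤ ng - 1, τ(m_i) = min{τ(k) : k ∈ Z_{≥0}}, i.e. τ achieves its global minimum at the points m_i with n(g-1) ≤ i ≤ ng - 1. -/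
open Finset

/-!
Write `Δ_j = F(j) + ⌊j n / (pqn - 1)⌋` with `F(j) = 1 + j - ⌈jp'/p⌉ - ⌈jq'/q⌉` (`deltaPQ`). The
relation `qp' + pq' = pq + 1` gives `F(j + pq) = F(j) - 1`, so on the block `[m_i, m_{i+1})`, where
the floor equals `i`, `Δ_j = F(j - pqi)`. Hence `τ(m_{i+1}) - τ(m_i)` is the sum of `F` over
`[-⌊i/n⌋, pq - ⌊(i+1)/n⌋)`: a window of length `pq`, which sums to `1 - g + ⌊i/n⌋` (one period
sums to `1 - g` by the symmetry `F(x) + F(pq - x) = [p ∣ x] + [q ∣ x] - 1`), possibly missing its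
last term `F(-⌊i/n⌋ - 1) - 1`, which the floor estimates for `F` control. This gives the sign
pattern of `τ(m_{i+1}) - τ(m_i)`. Finally `F ≥ 0` for `x ≤ 0` and `F ≤ 0` for `x > 0`, so inside
each block `τ` first increases and then decreases: its minimum is attained at some `m_i`.
-/

theorem Int.ceil_intCast_div_intCast {a b : ℤ} (hb : 0 < b) :
    ⌈(a : ℚ) / b⌉ = -((-a) / b) := by
  lift b to ℕ using hb.le
  exact_mod_cast Rat.ceil_intCast_div_natCast a b

theorem Int.ediv_add_neg_ediv {a b : ℤ} (hb : 0 < b) :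
    a / b + (-a) / b = if b ∣ a then 0 else -1 := by
  rw [Int.neg_ediv, Int.sign_eq_one_of_pos hb]
  split_ifs <;> ring

theorem Int.sum_Ico_consecutive {M : Type*} [AddCommMonoid M] (f : ℤ → M) {a b c : ℤ}
    (hab : a ≤ b) (hbc : b ≤ c) :
    ∑ x ∈ Ico a b, f x + ∑ x ∈ Ico b c, f x = ∑ x ∈ Ico a c, f x := by
  rw [← sum_union (Ico_disjoint_Ico_consecutive a b c), Ico_union_Ico_eq_Ico hab hbc]

theorem Int.sum_Ico_add_one_right {M : Type*} [AddCommMonoid M] (f : ℤ → M) {a b : ℤ}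
    (hab : a ≤ b) : ∑ x ∈ Ico a (b + 1), f x = ∑ x ∈ Ico a b, f x + f b := by
  rw [← insert_Ico_right_eq_Ico_add_one hab, sum_insert right_notMem_Ico, add_comm]

theorem Int.sum_Ico_add_one_add_one {M : Type*} [AddCommGroup M] (f : ℤ → M) {a b : ℤ}
    (hab : a ≤ b) :
    ∑ x ∈ Ico (a + 1) (b + 1), f x = ∑ x ∈ Ico a b, f x - f a + f b := by
  have h := sum_insert (f := f) (by simp : a ∉ Ico (a + 1) (b + 1))
  rw [insert_Ico_add_one_left_eq_Ico (by omega), Int.sum_Ico_add_one_right f hab] at h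
  rw [sub_add_eq_add_sub, h, add_sub_cancel_left]

theorem Int.sum_Ioo_reflect {M : Type*} [AddCommMonoid M] (f : ℤ → M) (a b : ℤ) :
    ∑ x ∈ Ioo a b, f (a + b - x) = ∑ x ∈ Ioo a b, f x :=
  sum_nbij' (a + b - ·) (a + b - ·) (fun x hx => by simp only [mem_Ioo] at *; omega)
    (fun x hx => by simp only [mem_Ioo] at *; omega) (fun x _ => by simp) (fun x _ => by simp)
    fun _ _ => rfl

theorem Int.sum_Ico_add_of_map_add_eq_sub {M : Type*} [AddCommGroup M] {f : ℤ → M} {T : ℤ}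
    {c : M} (hT : 0 ≤ T) (hf : ∀ x, f (x + T) = f x - c) (a : ℤ) :
    ∑ x ∈ Ico a (a + T), f x = ∑ x ∈ Ico 0 T, f x - a • c := by
  have step (b : ℤ) :
      ∑ x ∈ Ico (b + 1) (b + 1 + T), f x = ∑ x ∈ Ico b (b + T), f x - c := by
    rw [add_right_comm, Int.sum_Ico_add_one_add_one f (by omega), hf]
    abel
  induction a using Int.induction_on with
  | zero => simp
  | succ a ih => rw [step, ih]; module
  | pred a ih =>
    have h := step (-a - 1)
    rw [sub_add_cancel, ih] at h
    linear_combination (norm := module) -h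

theorem Int.add_one_ediv_eq_or {n : ℤ} (hn : 0 < n) (i : ℤ) :
    (i + 1) / n = i / n ∨ (i + 1) / n = i / n + 1 := by
  have h1 : i / n ≤ (i + 1) / n := Int.ediv_le_ediv hn (by omega)
  have h2 : (i + 1) / n - 1 ≤ i / n := by
    rw [Int.le_ediv_iff_mul_le hn]
    linarith [Int.ediv_mul_le (i + 1) hn.ne']
  omega

theorem Int.sum_Ioo_zero_mul_ite_dvd {p q : ℤ} (hp : 0 < p) (hq : 0 < q) :
    ∑ x ∈ Ioo 0 (p * q), (if p ∣ x then (1 : ℤ) else 0) = q - 1 := by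
  have hmul :
      {x ∈ Ioo 0 (p * q) | p ∣ x} = (Ioo 0 q).map ⟨(p * ·), mul_right_injective₀ hp.ne'⟩ := by
    ext x
    simp only [mem_filter, mem_Ioo, mem_map, Function.Embedding.coeFn_mk]
    constructor
    · rintro ⟨⟨h0, h1⟩, t, rfl⟩
      exact ⟨t, ⟨pos_of_mul_pos_right h0 hp.le, lt_of_mul_lt_mul_left h1 hp.le⟩, rfl⟩
    · rintro ⟨t, ⟨h0, h1⟩, rfl⟩
      exact ⟨⟨mul_pos hp h0, mul_lt_mul_of_pos_left h1 hp⟩, t, rfl⟩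
  rw [sum_boole, hmul, card_map, Int.card_Ioo]
  omega

theorem Int.mul_add_mul_eq_of_modEq {p q p' q' : ℤ} (hpq : IsCoprime p q)
    (hp'0 : 0 < p') (hp'p : p' < p) (hq'0 : 0 < q') (hq'q : q' < q)
    (hp' : q * p' ≡ 1 [ZMOD p]) (hq' : p * q' ≡ 1 [ZMOD q]) :
    q * p' + p * q' = p * q + 1 := by
  have hp : p ∣ q * p' + p * q' - (p * q + 1) := by
    have h := hp'.dvd.neg_right.add (dvd_mul_right p (q' - q))
    rwa [show -(1 - q * p') + p * (q' - q) = q * p' + p * q' - (p * q + 1) by ring] at h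
  have hq : q ∣ q * p' + p * q' - (p * q + 1) := by
    have h := hq'.dvd.neg_right.add (dvd_mul_right q (p' - p))
    rwa [show -(1 - p * q') + q * (p' - p) = q * p' + p * q' - (p * q + 1) by ring] at h
  have hlt : |q * p' + p * q' - (p * q + 1)| < p * q := abs_lt.2 ⟨by nlinarith, by nlinarith⟩
  linarith [Int.eq_zero_of_abs_lt_dvd (hpq.mul_dvd hp hq) hlt]

namespace Brieskorn

/-- `1 + j - ⌈j p'/p⌉ - ⌈j q'/q⌉`, written with `-((-a) / b) = ⌈a / b⌉` (valid for `b > 0`). -/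
def deltaPQ (p q p' q' j : ℤ) : ℤ := 1 + j + (-(j * p')) / p + (-(j * q')) / q

/-- `m_i`, the start of the block of the `j` with `⌊j n / (p q n - 1)⌋ = i`. -/
def blockStart (p q n i : ℤ) : ℤ := p * q * i - i / n

variable {p q n p' q' g : ℤ}

theorem deltaPQ_add_mul (hp : 0 < p) (hq : 0 < q) (hkey : q * p' + p * q' = p * q + 1)
    (j i : ℤ) : deltaPQ p q p' q' (j + p * q * i) = deltaPQ p q p' q' j - i := by
  have e1 : -((j + p * q * i) * p') = -(j * p') + p * (-(q * i * p')) := by ring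
  have e2 : -((j + p * q * i) * q') = -(j * q') + q * (-(p * i * q')) := by ring
  simp only [deltaPQ, e1, e2, Int.add_mul_ediv_left _ _ hp.ne', Int.add_mul_ediv_left _ _ hq.ne']
  linear_combination (-i) * hkey

-- As `p'/p + q'/q = 1 + 1/(pq)`, `deltaPQ x` lies in `(-1 - x/(pq), 1 - x/(pq)]`.
theorem deltaPQ_nonneg_of_nonpos (hp : 0 < p) (hq : 0 < q)
    (hkey : q * p' + p * q' = p * q + 1) {x : ℤ} (hx : x ≤ 0) : 0 ≤ deltaPQ p q p' q' x := by
  have hA := Int.lt_ediv_add_one_mul_self (-(x * p')) hp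
  have hB := Int.lt_ediv_add_one_mul_self (-(x * q')) hq
  have : p * q * -1 < p * q * deltaPQ p q p' q' x := by
    unfold deltaPQ
    nlinarith [mul_lt_mul_of_pos_left hA hq, mul_lt_mul_of_pos_left hB hp]
  have := lt_of_mul_lt_mul_left this (mul_pos hp hq).le
  omega

theorem deltaPQ_nonpos_of_pos (hp : 0 < p) (hq : 0 < q)
    (hkey : q * p' + p * q' = p * q + 1) {x : ℤ} (hx : 0 < x) : deltaPQ p q p' q' x ≤ 0 := by
  have hA := Int.ediv_mul_le (-(x * p')) hp.ne'
  have hB := Int.ediv_mul_le (-(x * q')) hq.ne'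
  have : p * q * deltaPQ p q p' q' x < p * q * 1 := by
    unfold deltaPQ
    nlinarith [mul_le_mul_of_nonneg_left hA hq.le, mul_le_mul_of_nonneg_left hB hp.le]
  have := lt_of_mul_lt_mul_left this (mul_pos hp hq).le
  omega

theorem deltaPQ_neg_le (hp : 0 < p) (hq : 0 < q) (hkey : q * p' + p * q' = p * q + 1)
    {y : ℤ} (hgpq : g < p * q) (hy : g ≤ y) : deltaPQ p q p' q' (-y) ≤ 1 - g + y := by
  have hA := Int.ediv_mul_le (-(-y * p')) hp.ne'
  have hB := Int.ediv_mul_le (-(-y * q')) hq.ne'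
  have hy' : y * (q * p') + y * (p * q') = y * (p * q) + y := by linear_combination y * hkey
  have : p * q * deltaPQ p q p' q' (-y) < p * q * (2 - g + y) := by
    unfold deltaPQ
    nlinarith [mul_le_mul_of_nonneg_left hA hq.le, mul_le_mul_of_nonneg_left hB hp.le,
      mul_nonneg (sub_nonneg.2 hy) (by have := mul_pos hp hq; omega : 0 ≤ p * q - 1)]
  have := lt_of_mul_lt_mul_left this (mul_pos hp hq).le
  omega

theorem deltaPQ_add_deltaPQ_neg (hp : 0 < p) (hq : 0 < q) (hkey : q * p' + p * q' = p * q + 1)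
    (x : ℤ) : deltaPQ p q p' q' x + deltaPQ p q p' q' (-x)
      = (if p ∣ x then 1 else 0) + (if q ∣ x then 1 else 0) := by
  have hpp' : IsCoprime p p' := ⟨q' - q, q, by linear_combination hkey⟩
  have hqq' : IsCoprime q q' := ⟨p' - p, p, by linear_combination hkey⟩
  have sp := Int.ediv_add_neg_ediv (a := x * p') hp
  have sq := Int.ediv_add_neg_ediv (a := x * q') hq
  simp only [show p ∣ x * p' ↔ p ∣ x from ⟨hpp'.dvd_of_dvd_mul_right, (·.mul_right _)⟩] at sp
  simp only [show q ∣ x * q' ↔ q ∣ x from ⟨hqq'.dvd_of_dvd_mul_right, (·.mul_right _)⟩] at sq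
  simp only [deltaPQ, neg_mul, neg_neg]
  split_ifs at sp sq ⊢ <;> linarith

theorem sum_deltaPQ_Ico (hp : 0 < p) (hq : 0 < q) (hkey : q * p' + p * q' = p * q + 1)
    (hg : 2 * g = (p - 1) * (q - 1)) :
    ∑ x ∈ Ico 0 (p * q), deltaPQ p q p' q' x = 1 - g := by
  have hpq : 0 < p * q := mul_pos hp hq
  have hrefl (x : ℤ) : deltaPQ p q p' q' x + deltaPQ p q p' q' (0 + p * q - x)
      = (if p ∣ x then 1 else 0) + (if q ∣ x then 1 else 0) - 1 := by
    have := deltaPQ_add_mul hp hq hkey (-x) 1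
    rw [mul_one, neg_add_eq_sub] at this
    rw [zero_add, this, ← deltaPQ_add_deltaPQ_neg hp hq hkey x]
    ring
  have hsum : 2 * ∑ x ∈ Ioo 0 (p * q), deltaPQ p q p' q' x = p + q - p * q - 1 := by
    rw [two_mul]
    nth_rewrite 2 [← Int.sum_Ioo_reflect]
    have hcount := Int.sum_Ioo_zero_mul_ite_dvd hq hp
    rw [mul_comm q p] at hcount
    rw [← sum_add_distrib, sum_congr rfl fun x _ => hrefl x, sum_sub_distrib, sum_add_distrib,
      Int.sum_Ioo_zero_mul_ite_dvd hp hq, hcount, sum_const, Int.card_Ioo]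
    simp only [nsmul_eq_mul, mul_one]
    omega
  rw [← Ioo_insert_left hpq, sum_insert (by simp)]
  simp only [deltaPQ, zero_mul, neg_zero, Int.zero_ediv, add_zero] at hsum ⊢
  linarith

theorem sum_deltaPQ_Ico_sub (hp : 0 < p) (hq : 0 < q) (hkey : q * p' + p * q' = p * q + 1)
    (hg : 2 * g = (p - 1) * (q - 1)) (s : ℤ) :
    ∑ x ∈ Ico (-s) (p * q - s), deltaPQ p q p' q' x = 1 - g + s := by
  have hper (x : ℤ) : deltaPQ p q p' q' (x + p * q) = deltaPQ p q p' q' x - 1 := by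
    simpa using deltaPQ_add_mul hp hq hkey x 1
  have := Int.sum_Ico_add_of_map_add_eq_sub (mul_pos hp hq).le hper (-s)
  rw [neg_add_eq_sub, sum_deltaPQ_Ico hp hq hkey hg, smul_eq_mul, mul_one] at this
  linarith

theorem brieskornDelta_eq (hp : 0 < p) (hq : 0 < q) (hr : 0 < p * q * n - 1) (j : ℤ) :
    brieskornDelta p q n p' q' j = deltaPQ p q p' q' j + j * n / (p * q * n - 1) := by
  have c1 := Int.ceil_intCast_div_intCast (a := j * p') hp
  have c2 := Int.ceil_intCast_div_intCast (a := j * q') hq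
  have c3 := Int.ceil_intCast_div_intCast (a := j * (p * q * n - n - 1)) hr
  push_cast at c1 c2 c3
  rw [brieskornDelta, c1, c2, c3, deltaPQ,
    show -(j * (p * q * n - n - 1)) = j * n + (p * q * n - 1) * (-j) by ring,
    Int.add_mul_ediv_left _ _ hr.ne']
  ring

theorem blockStart_le_iff (hn : 0 < n) {i j : ℤ} :
    blockStart p q n i ≤ j ↔ i * (p * q * n - 1) ≤ j * n := by
  rw [blockStart, sub_le_comm, Int.le_ediv_iff_mul_le hn]
  constructor <;> intro h <;> linarith

theorem ediv_eq_iff_mem_block (hn : 0 < n) (hr : 0 < p * q * n - 1) {i j : ℤ} :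
    j * n / (p * q * n - 1) = i ↔ blockStart p q n i ≤ j ∧ j < blockStart p q n (i + 1) := by
  rw [Int.ediv_eq_iff_of_pos hr, blockStart_le_iff hn, ← not_le, ← not_le, blockStart_le_iff hn,
    add_one_mul]

theorem brieskornDelta_of_mem_block (hp : 0 < p) (hq : 0 < q) (hn : 0 < n)
    (hr : 0 < p * q * n - 1) (hkey : q * p' + p * q' = p * q + 1) {i j : ℤ}
    (hj : blockStart p q n i ≤ j ∧ j < blockStart p q n (i + 1)) :
    brieskornDelta p q n p' q' j = deltaPQ p q p' q' (j - p * q * i) := by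
  have := deltaPQ_add_mul (p' := p') hp hq hkey (j - p * q * i) i
  rw [sub_add_cancel] at this
  rw [brieskornDelta_eq hp hq hr, (ediv_eq_iff_mem_block hn hr).2 hj]
  linarith

theorem blockStart_nonneg (hpq : 0 < p * q) {i : ℤ} (hi : 0 ≤ i) :
    0 ≤ blockStart p q n i := by
  have := Int.ediv_le_self n hi
  unfold blockStart
  nlinarith

theorem blockStart_le_succ (hpq : 0 < p * q) (hn : 0 < n) (i : ℤ) :
    blockStart p q n i ≤ blockStart p q n (i + 1) := by
  unfold blockStart
  rcases Int.add_one_ediv_eq_or hn i with h | h <;> rw [h] <;> linarith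

theorem brieskornTau_eq_sum_Ico (k : ℤ) :
    brieskornTau p q n p' q' k = ∑ j ∈ Ico 0 k, brieskornDelta p q n p' q' j := by
  simp [brieskornTau, Int.Ico_eq_finset_map, sum_map]

theorem brieskornTau_add_sum_Ico {a b : ℤ} (ha : 0 ≤ a) (hab : a ≤ b) :
    brieskornTau p q n p' q' a + ∑ j ∈ Ico a b, brieskornDelta p q n p' q' j
      = brieskornTau p q n p' q' b := by
  rw [brieskornTau_eq_sum_Ico, brieskornTau_eq_sum_Ico, Int.sum_Ico_consecutive _ ha hab]

theorem brieskornTau_blockStart_succ (hp : 0 < p) (hq : 0 < q) (hn : 0 < n)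
    (hr : 0 < p * q * n - 1) (hkey : q * p' + p * q' = p * q + 1) {i : ℤ} (hi : 0 ≤ i) :
    brieskornTau p q n p' q' (blockStart p q n (i + 1))
      = brieskornTau p q n p' q' (blockStart p q n i)
        + ∑ x ∈ Ico (-(i / n)) (p * q - (i + 1) / n), deltaPQ p q p' q' x := by
  have hpq := mul_pos hp hq
  rw [← brieskornTau_add_sum_Ico (blockStart_nonneg hpq hi) (blockStart_le_succ hpq hn i)]
  congr 1
  rw [show blockStart p q n i = -(i / n) + p * q * i by unfold blockStart; ring,
    show blockStart p q n (i + 1) = p * q - (i + 1) / n + p * q * i by unfold blockStart; ring,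
    ← sum_Ico_add']
  refine sum_congr rfl fun x hx => ?_
  rw [mem_Ico] at hx
  rw [brieskornDelta_of_mem_block hp hq hn hr hkey (i := i), add_sub_cancel_right]
  unfold blockStart
  constructor <;> linarith

theorem brieskornTau_blockStart_succ_eq_or (hp : 0 < p) (hq : 0 < q) (hn : 0 < n)
    (hr : 0 < p * q * n - 1) (hkey : q * p' + p * q' = p * q + 1)
    (hg : 2 * g = (p - 1) * (q - 1)) {i : ℤ} (hi : 0 ≤ i) :
    ((i + 1) / n = i / n ∧ brieskornTau p q n p' q' (blockStart p q n (i + 1))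
        = brieskornTau p q n p' q' (blockStart p q n i) + (1 - g + i / n)) ∨
    ((i + 1) / n = i / n + 1 ∧ brieskornTau p q n p' q' (blockStart p q n (i + 1))
        = brieskornTau p q n p' q' (blockStart p q n i)
          + (2 - g + i / n - deltaPQ p q p' q' (-(i / n + 1)))) := by
  rw [brieskornTau_blockStart_succ hp hq hn hr hkey hi]
  have hwin := sum_deltaPQ_Ico_sub hp hq hkey hg (i / n)
  rcases Int.add_one_ediv_eq_or hn i with h | h
  · exact .inl ⟨h, by rw [h, hwin]⟩
  · refine .inr ⟨h, ?_⟩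
    have hper := deltaPQ_add_mul (p' := p') hp hq hkey (-(i / n + 1)) 1
    rw [mul_one, neg_add_eq_sub] at hper
    rw [show p * q - i / n = p * q - (i / n + 1) + 1 by ring,
      Int.sum_Ico_add_one_right _ (by linarith [mul_pos hp hq])] at hwin
    rw [h]
    linarith

theorem brieskornTau_blockStart_succ_le (hp : 0 < p) (hq : 0 < q) (hn : 0 < n)
    (hr : 0 < p * q * n - 1) (hkey : q * p' + p * q' = p * q + 1)
    (hg : 2 * g = (p - 1) * (q - 1)) {i : ℤ} (hi : 0 ≤ i) (hig : (i + 1) / n ≤ g - 1) :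
    brieskornTau p q n p' q' (blockStart p q n (i + 1))
      ≤ brieskornTau p q n p' q' (blockStart p q n i) := by
  rcases brieskornTau_blockStart_succ_eq_or hp hq hn hr hkey hg hi with ⟨hs, he⟩ | ⟨hs, he⟩
  · linarith
  · have := deltaPQ_nonneg_of_nonpos (p' := p') hp hq hkey
      (x := -(i / n + 1)) (by linarith [Int.ediv_nonneg hi hn.le])
    linarith

theorem brieskornTau_blockStart_le_succ (hp : 0 < p) (hq : 0 < q) (hn : 0 < n)
    (hr : 0 < p * q * n - 1) (hkey : q * p' + p * q' = p * q + 1)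
    (hg : 2 * g = (p - 1) * (q - 1)) {i : ℤ} (hi : 0 ≤ i) (hig : g - 1 ≤ i / n) :
    brieskornTau p q n p' q' (blockStart p q n i)
      ≤ brieskornTau p q n p' q' (blockStart p q n (i + 1)) := by
  rcases brieskornTau_blockStart_succ_eq_or hp hq hn hr hkey hg hi with ⟨hs, he⟩ | ⟨hs, he⟩
  · linarith
  · have := deltaPQ_neg_le (p' := p') hp hq hkey (by nlinarith : g < p * q)
      (by linarith : g ≤ i / n + 1)
    linarith

theorem exists_brieskornTau_blockStart_le (hp : 0 < p) (hq : 0 < q) (hn : 0 < n)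
    (hr : 0 < p * q * n - 1) (hkey : q * p' + p * q' = p * q + 1) {k : ℤ} (hk : 0 ≤ k) :
    ∃ i, 0 ≤ i ∧
      brieskornTau p q n p' q' (blockStart p q n i) ≤ brieskornTau p q n p' q' k := by
  set i := k * n / (p * q * n - 1) with hi_def
  have hi : 0 ≤ i := Int.ediv_nonneg (mul_nonneg hk hn.le) hr.le
  obtain ⟨hik, hki⟩ := (ediv_eq_iff_mem_block hn hr).1 hi_def.symm
  have hdelta {j : ℤ} (hij : blockStart p q n i ≤ j) (hji : j < blockStart p q n (i + 1)) :=
    brieskornDelta_of_mem_block (p' := p') hp hq hn hr hkey ⟨hij, hji⟩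
  rcases le_or_gt k (p * q * i) with hle | hlt
  · refine ⟨i, hi, ?_⟩
    rw [← brieskornTau_add_sum_Ico (blockStart_nonneg (mul_pos hp hq) hi) hik]
    refine le_add_of_nonneg_right (sum_nonneg fun j hj => ?_)
    rw [mem_Ico] at hj
    rw [hdelta hj.1 (by omega)]
    exact deltaPQ_nonneg_of_nonpos hp hq hkey (by omega)
  · refine ⟨i + 1, by omega, ?_⟩
    rw [← brieskornTau_add_sum_Ico hk hki.le]
    refine add_le_of_nonpos_right (sum_nonpos fun j hj => ?_)
    rw [mem_Ico] at hj
    rw [hdelta (by omega) hj.2]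
    exact deltaPQ_nonpos_of_pos hp hq hkey (by omega)

theorem brieskornTau_blockStart_antitoneOn (hp : 0 < p) (hq : 0 < q) (hn : 0 < n)
    (hr : 0 < p * q * n - 1) (hkey : q * p' + p * q' = p * q + 1)
    (hg : 2 * g = (p - 1) * (q - 1)) :
    AntitoneOn (fun i => brieskornTau p q n p' q' (blockStart p q n i)) (Set.Icc 0 (n * g - 1)) :=
  antitoneOn_of_add_one_le Set.ordConnected_Icc fun i _ hi hi1 =>
    brieskornTau_blockStart_succ_le hp hq hn hr hkey hg hi.1 <|
      Int.le_sub_one_of_lt <| (Int.ediv_lt_iff_lt_mul hn).2 (by linarith [hi1.2])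

theorem brieskornTau_blockStart_monotoneOn (hp : 0 < p) (hq : 0 < q) (hn : 0 < n)
    (hr : 0 < p * q * n - 1) (hkey : q * p' + p * q' = p * q + 1)
    (hg : 2 * g = (p - 1) * (q - 1)) (hg1 : 1 ≤ g) :
    MonotoneOn (fun i => brieskornTau p q n p' q' (blockStart p q n i)) (Set.Ici (n * (g - 1))) :=
  monotoneOn_of_le_add_one Set.ordConnected_Ici fun i _ hi _ =>
    brieskornTau_blockStart_le_succ hp hq hn hr hkey hg
      ((mul_nonneg hn.le (sub_nonneg.2 hg1)).trans hi)
      ((Int.le_ediv_iff_mul_le hn).2 (by linarith [Set.mem_Ici.1 hi]))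

end Brieskorn

open Brieskorn

/-- For the tau function `τ` of `Σ(p,q,pqn-1)` (coprime `p,q ≥ 2`, `n ≥ 1`), with
`g = (p-1)(q-1)/2`, `N = n(2g-1)` and `m_i = pqi - ⌊i/n⌋`:
`τ(m_{i+1}) - τ(m_i) ≤ 0` for `0 ≤ i ≤ n(g-1) - 1`, `= 0` for `n(g-1) ≤ i ≤ ng - 2`,
and `≥ 0` for `ng - 1 ≤ i ≤ N - 2`.  Consequently `τ` achieves its global minimum over
`ℤ_{≥0}` at each `m_i` with `n(g-1) ≤ i ≤ ng - 1`. -/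
theorem brieskornTau_min (p q n p' q' : ℤ) (hp : 2 ≤ p) (hq : 2 ≤ q)
    (hpq : IsCoprime p q) (hn : 1 ≤ n)
    (hp'0 : 0 < p') (hp'p : p' < p) (hq'0 : 0 < q') (hq'q : q' < q)
    (hp' : q * p' ≡ 1 [ZMOD p]) (hq' : p * q' ≡ 1 [ZMOD q])
    (g : ℤ) (hg : 2 * g = (p - 1) * (q - 1)) :
    (∀ i : ℤ, 0 ≤ i → i ≤ n * (g - 1) - 1 →
      brieskornTau p q n p' q' (p * q * (i + 1) - (i + 1) / n)
        ≤ brieskornTau p q n p' q' (p * q * i - i / n)) ∧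
    (∀ i : ℤ, n * (g - 1) ≤ i → i ≤ n * g - 2 →
      brieskornTau p q n p' q' (p * q * (i + 1) - (i + 1) / n)
        = brieskornTau p q n p' q' (p * q * i - i / n)) ∧
    (∀ i : ℤ, n * g - 1 ≤ i → i ≤ n * (2 * g - 1) - 2 →
      brieskornTau p q n p' q' (p * q * i - i / n)
        ≤ brieskornTau p q n p' q' (p * q * (i + 1) - (i + 1) / n)) ∧
    (∀ i : ℤ, n * (g - 1) ≤ i → i ≤ n * g - 1 →
      ∀ k : ℤ, 0 ≤ k →
        brieskornTau p q n p' q' (p * q * i - i / n) ≤ brieskornTau p q n p' q' k) := by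
  have hp0 : 0 < p := by omega
  have hq0 : 0 < q := by omega
  have hn0 : 0 < n := by omega
  have hr : 0 < p * q * n - 1 := by nlinarith [mul_le_mul hp hq zero_le_two hp0.le]
  have hg1 : 1 ≤ g := by nlinarith
  have hkey := Int.mul_add_mul_eq_of_modEq hpq hp'0 hp'p hq'0 hq'q hp' hq'
  have dec := brieskornTau_blockStart_antitoneOn hp0 hq0 hn0 hr hkey hg
  have inc := brieskornTau_blockStart_monotoneOn hp0 hq0 hn0 hr hkey hg hg1
  have hng : 0 ≤ n * (g - 1) ∧ n * (g - 1) ≤ n * g - 1 := ⟨by nlinarith, by nlinarith⟩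
  refine ⟨fun i hi hi' => dec ⟨hi, by omega⟩ ⟨by omega, by omega⟩ (by omega),
    fun i hi hi' => le_antisymm (dec ⟨by omega, by omega⟩ ⟨by omega, by omega⟩ (by omega))
      (inc hi (Set.mem_Ici.2 (by omega)) (by omega)),
    fun i hi _ => inc (Set.mem_Ici.2 (by omega)) (Set.mem_Ici.2 (by omega)) (by omega),
    fun i hi hi' k hk => ?_⟩
  obtain ⟨j, hj, hjk⟩ := exists_brieskornTau_blockStart_le (p' := p') hp0 hq0 hn0 hr hkey hk
  refine le_trans ?_ hjk
  rcases le_total j i with hji | hij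
  · exact dec ⟨hj, by omega⟩ ⟨by omega, hi'⟩ hji
  · exact inc hi (Set.mem_Ici.2 (hi.trans hij)) hij
end

section
/- Fix an integer n ≥ 1 and let τ be the tau function of Σ(2,5,10n-3). Define M_i := 10i+1 for 0 ≤ i ≤ 3n-2, and m_0 := 0, m_i := 10i-2 for 1 ≤ i ≤ n-1, m_i := 10i-8 for n ≤ i ≤ 3n-1. Then: (a) τ(j+1) ≥ τ(j) whenever m_i ≤ j < M_i with 0 ≤ i ≤ 3n-2, τ(j+1) ≤ τ(j) whenever M_i ≤ j < m_{i+1} with 0 ≤ i ≤ 3n-2, and τ(j+1) ≥ τ(j) for all j ≥ m_{3n-1}; (b) τ(M_i) = 1-i for 0 ≤ i ≤ n-1, τ(M_i) = 2-n for n ≤ i ≤ 2n-2, and τ(M_i) = 3-3n+i for 2n-1 ≤ i ≤ 3n-2; (c) τ(m_i) = -i for 0 ≤ i ≤ n-1, τ(m_i) = 1-n for n ≤ i ≤ 2n-1, and τ(m_i) = 1-3n+i for 2n ≤ i ≤ 3n-1. -/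
/-- `Δ_j = 1 + j - ⌈j/2⌉ - ⌈j/5⌉ - ⌈j(3n-1)/(10n-3)⌉` for the Seifert data
`(-1, (2,1), (5,1), (10n-3, 3n-1))` of `Σ(2,5,10n-3)`. -/
noncomputable def delta25m (n j : ℤ) : ℤ :=
  1 + j - ⌈(j : ℚ) / 2⌉ - ⌈(j : ℚ) / 5⌉ - ⌈(j * (3 * n - 1) : ℚ) / (10 * n - 3 : ℚ)⌉

/-- The tau function `τ(k) = Σ_{j=0}^{k-1} Δ_j` of `Σ(2,5,10n-3)`. -/
noncomputable def tau25m (n k : ℤ) : ℤ := ∑ j ∈ Finset.range k.toNat, delta25m n (j : ℤ)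

/-- `M_i = 10i + 1`. -/
def M25m (i : ℤ) : ℤ := 10 * i + 1

/-- `m_0 = 0`, `m_i = 10i - 2` for `1 ≤ i ≤ n-1`, and `m_i = 10i - 8` for `n ≤ i`. -/
def m25m (n i : ℤ) : ℤ := if i = 0 then 0 else if i ≤ n - 1 then 10 * i - 2 else 10 * i - 8

lemma ceil_div_eq (x y c : ℤ) (hy : 0 < y) (h1 : y*(c-1) < x) (h2 : x ≤ y*c) :
    ⌈(x:ℚ)/(y:ℚ)⌉ = c := by
  have hy' : (0:ℚ) < y := by exact_mod_cast hy
  rw [Int.ceil_eq_iff]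
  constructor
  · rw [lt_div_iff₀ hy']
    have : ((y*(c-1) : ℤ) : ℚ) < x := by exact_mod_cast h1
    push_cast at this ⊢; nlinarith
  · rw [div_le_iff₀ hy']
    have : ((x:ℤ):ℚ) ≤ ((y*c : ℤ):ℚ) := by exact_mod_cast h2
    push_cast at this ⊢; nlinarith

lemma ceil_div_le (x y c : ℤ) (hy : 0 < y) (h2 : x ≤ y*c) :
    ⌈(x:ℚ)/(y:ℚ)⌉ ≤ c := by
  have hy' : (0:ℚ) < y := by exact_mod_cast hy
  apply Int.ceil_le.mpr
  rw [div_le_iff₀ hy']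
  have : ((x:ℤ):ℚ) ≤ ((y*c : ℤ):ℚ) := by exact_mod_cast h2
  push_cast at this ⊢; nlinarith

lemma le_ceil_div (x y c : ℤ) (hy : 0 < y) (h1 : y*(c-1) < x) :
    c ≤ ⌈(x:ℚ)/(y:ℚ)⌉ := by
  have hy' : (0:ℚ) < y := by exact_mod_cast hy
  by_contra h
  push_neg at h
  have := Int.ceil_le.mp (by omega : ⌈(x:ℚ)/(y:ℚ)⌉ ≤ c - 1)
  rw [div_le_iff₀ hy'] at this
  have h1' : ((y*(c-1) : ℤ) : ℚ) < x := by exact_mod_cast h1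
  push_cast at this h1'; nlinarith

lemma delta_decomp (n a r : ℤ) (hn : 1 ≤ n) :
    delta25m n (10*a+r) = 1 + r - ⌈(r:ℚ)/2⌉ - ⌈(r:ℚ)/5⌉
      - ⌈((3*r*(10*n-3) - (10*a+r) : ℤ):ℚ)/((10*(10*n-3) : ℤ):ℚ)⌉ := by
  have hp : (10*(n:ℚ)-3) ≠ 0 := by
    have : (1:ℚ) ≤ n := by exact_mod_cast hn
    intro h; nlinarith
  unfold delta25m
  have e2 : ⌈((10*a+r : ℤ):ℚ)/2⌉ = ⌈(r:ℚ)/2⌉ + 5*a := by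
    rw [show ((10*a+r : ℤ):ℚ)/2 = (r:ℚ)/2 + (5*a : ℤ) by push_cast; ring, Int.ceil_add_intCast]
  have e5 : ⌈((10*a+r : ℤ):ℚ)/5⌉ = ⌈(r:ℚ)/5⌉ + 2*a := by
    rw [show ((10*a+r : ℤ):ℚ)/5 = (r:ℚ)/5 + (2*a : ℤ) by push_cast; ring, Int.ceil_add_intCast]
  have ep : ⌈(((10*a+r:ℤ):ℚ) * (3*(n:ℚ)-1))/(10*(n:ℚ)-3)⌉
      = ⌈((3*r*(10*n-3) - (10*a+r) : ℤ):ℚ)/((10*(10*n-3) : ℤ):ℚ)⌉ + 3*a := by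
    rw [show (((10*a+r:ℤ):ℚ) * (3*(n:ℚ)-1))/(10*(n:ℚ)-3)
        = ((3*r*(10*n-3) - (10*a+r) : ℤ):ℚ)/((10*(10*n-3) : ℤ):ℚ) + ((3*a : ℤ):ℚ) by
      push_cast; field_simp; ring, Int.ceil_add_intCast]
  push_cast
  push_cast at e2 e5 ep
  rw [e2, e5, ep]
  ring

lemma dd0 (n a : ℤ) (hn : 1 ≤ n) :
    delta25m n (10*a) = 1 - ⌈((3*0*(10*n-3) - (10*a) : ℤ):ℚ)/((10*(10*n-3) : ℤ):ℚ)⌉ := by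
  have h := delta_decomp n a 0 hn
  rw [show (10*a+0 : ℤ) = 10*a from by ring] at h
  rw [h]
  push_cast
  norm_num

lemma dd1 (n a : ℤ) (hn : 1 ≤ n) :
    delta25m n (10*a+1) = 0 - ⌈((3*1*(10*n-3) - (10*a+1) : ℤ):ℚ)/((10*(10*n-3) : ℤ):ℚ)⌉ := by
  rw [delta_decomp n a 1 hn]
  have h2 : ⌈((1:ℤ):ℚ)/2⌉ = 1 := by rw [Int.ceil_eq_iff]; norm_num
  have h5 : ⌈((1:ℤ):ℚ)/5⌉ = 1 := by rw [Int.ceil_eq_iff]; norm_num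
  rw [h2, h5]; ring

lemma dd2 (n a : ℤ) (hn : 1 ≤ n) :
    delta25m n (10*a+2) = 1 - ⌈((3*2*(10*n-3) - (10*a+2) : ℤ):ℚ)/((10*(10*n-3) : ℤ):ℚ)⌉ := by
  rw [delta_decomp n a 2 hn]
  have h2 : ⌈((2:ℤ):ℚ)/2⌉ = 1 := by rw [Int.ceil_eq_iff]; norm_num
  have h5 : ⌈((2:ℤ):ℚ)/5⌉ = 1 := by rw [Int.ceil_eq_iff]; norm_num
  rw [h2, h5]; ring

lemma dd3 (n a : ℤ) (hn : 1 ≤ n) :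
    delta25m n (10*a+3) = 1 - ⌈((3*3*(10*n-3) - (10*a+3) : ℤ):ℚ)/((10*(10*n-3) : ℤ):ℚ)⌉ := by
  rw [delta_decomp n a 3 hn]
  have h2 : ⌈((3:ℤ):ℚ)/2⌉ = 2 := by rw [Int.ceil_eq_iff]; norm_num
  have h5 : ⌈((3:ℤ):ℚ)/5⌉ = 1 := by rw [Int.ceil_eq_iff]; norm_num
  rw [h2, h5]; ring

lemma dd4 (n a : ℤ) (hn : 1 ≤ n) :
    delta25m n (10*a+4) = 2 - ⌈((3*4*(10*n-3) - (10*a+4) : ℤ):ℚ)/((10*(10*n-3) : ℤ):ℚ)⌉ := by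
  rw [delta_decomp n a 4 hn]
  have h2 : ⌈((4:ℤ):ℚ)/2⌉ = 2 := by rw [Int.ceil_eq_iff]; norm_num
  have h5 : ⌈((4:ℤ):ℚ)/5⌉ = 1 := by rw [Int.ceil_eq_iff]; norm_num
  rw [h2, h5]; ring

lemma dd5 (n a : ℤ) (hn : 1 ≤ n) :
    delta25m n (10*a+5) = 2 - ⌈((3*5*(10*n-3) - (10*a+5) : ℤ):ℚ)/((10*(10*n-3) : ℤ):ℚ)⌉ := by
  rw [delta_decomp n a 5 hn]
  have h2 : ⌈((5:ℤ):ℚ)/2⌉ = 3 := by rw [Int.ceil_eq_iff]; norm_num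
  have h5 : ⌈((5:ℤ):ℚ)/5⌉ = 1 := by rw [Int.ceil_eq_iff]; norm_num
  rw [h2, h5]; ring

lemma dd6 (n a : ℤ) (hn : 1 ≤ n) :
    delta25m n (10*a+6) = 2 - ⌈((3*6*(10*n-3) - (10*a+6) : ℤ):ℚ)/((10*(10*n-3) : ℤ):ℚ)⌉ := by
  rw [delta_decomp n a 6 hn]
  have h2 : ⌈((6:ℤ):ℚ)/2⌉ = 3 := by rw [Int.ceil_eq_iff]; norm_num
  have h5 : ⌈((6:ℤ):ℚ)/5⌉ = 2 := by rw [Int.ceil_eq_iff]; norm_num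
  rw [h2, h5]; ring

lemma dd7 (n a : ℤ) (hn : 1 ≤ n) :
    delta25m n (10*a+7) = 2 - ⌈((3*7*(10*n-3) - (10*a+7) : ℤ):ℚ)/((10*(10*n-3) : ℤ):ℚ)⌉ := by
  rw [delta_decomp n a 7 hn]
  have h2 : ⌈((7:ℤ):ℚ)/2⌉ = 4 := by rw [Int.ceil_eq_iff]; norm_num
  have h5 : ⌈((7:ℤ):ℚ)/5⌉ = 2 := by rw [Int.ceil_eq_iff]; norm_num
  rw [h2, h5]; ring

lemma dd8 (n a : ℤ) (hn : 1 ≤ n) :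
    delta25m n (10*a+8) = 3 - ⌈((3*8*(10*n-3) - (10*a+8) : ℤ):ℚ)/((10*(10*n-3) : ℤ):ℚ)⌉ := by
  rw [delta_decomp n a 8 hn]
  have h2 : ⌈((8:ℤ):ℚ)/2⌉ = 4 := by rw [Int.ceil_eq_iff]; norm_num
  have h5 : ⌈((8:ℤ):ℚ)/5⌉ = 2 := by rw [Int.ceil_eq_iff]; norm_num
  rw [h2, h5]; ring

lemma dd9 (n a : ℤ) (hn : 1 ≤ n) :
    delta25m n (10*a+9) = 3 - ⌈((3*9*(10*n-3) - (10*a+9) : ℤ):ℚ)/((10*(10*n-3) : ℤ):ℚ)⌉ := by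
  rw [delta_decomp n a 9 hn]
  have h2 : ⌈((9:ℤ):ℚ)/2⌉ = 5 := by rw [Int.ceil_eq_iff]; norm_num
  have h5 : ⌈((9:ℤ):ℚ)/5⌉ = 2 := by rw [Int.ceil_eq_iff]; norm_num
  rw [h2, h5]; ring

lemma tau_succ' (n k : ℤ) (hk : 0 ≤ k) : tau25m n (k+1) = tau25m n k + delta25m n k := by
  unfold tau25m
  rw [show (k+1).toNat = k.toNat + 1 by omega, Finset.sum_range_succ, Int.toNat_of_nonneg hk]

lemma tau_add' (n k : ℤ) (hk : 0 ≤ k) (t : ℕ) :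
    tau25m n (k + t) = tau25m n k + ∑ s ∈ Finset.range t, delta25m n (k + s) := by
  induction t with
  | zero => simp
  | succ t ih =>
    rw [show k + ((t+1 : ℕ) : ℤ) = (k + t) + 1 by push_cast; ring,
      tau_succ' n (k + t) (by exact add_nonneg hk (Int.natCast_nonneg t)), ih,
      Finset.sum_range_succ]
    ring

lemma tau_block10 (n k : ℤ) (hk : 0 ≤ k) :
    tau25m n (k+10) = tau25m n k + delta25m n k + delta25m n (k+1) + delta25m n (k+2)
      + delta25m n (k+3) + delta25m n (k+4) + delta25m n (k+5) + delta25m n (k+6)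
      + delta25m n (k+7) + delta25m n (k+8) + delta25m n (k+9) := by
  have h := tau_add' n k hk 10
  norm_num [Finset.sum_range_succ] at h
  linarith [h]

lemma tau_block3 (n k : ℤ) (hk : 0 ≤ k) :
    tau25m n (k+3) = tau25m n k + delta25m n k + delta25m n (k+1) + delta25m n (k+2) := by
  have h := tau_add' n k hk 3
  norm_num [Finset.sum_range_succ] at h
  linarith [h]

lemma tau_block9 (n k : ℤ) (hk : 0 ≤ k) :
    tau25m n (k+9) = tau25m n k + delta25m n k + delta25m n (k+1) + delta25m n (k+2)
      + delta25m n (k+3) + delta25m n (k+4) + delta25m n (k+5) + delta25m n (k+6)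
      + delta25m n (k+7) + delta25m n (k+8) := by
  have h := tau_add' n k hk 9
  norm_num [Finset.sum_range_succ] at h
  linarith [h]

lemma delta_nonneg_of (n j : ℤ) (hn : 1 ≤ n) (hj : 0 ≤ j)
    (h1 : j % 10 = 1 → 30*n-9 ≤ j) (h7 : j % 10 = 7 → 10*n-3 ≤ j) :
    0 ≤ delta25m n j := by
  have hp : (0:ℤ) < 10*(10*n-3) := by linarith
  obtain ⟨a, r, hr0, hr9, rfl⟩ : ∃ a r, 0 ≤ r ∧ r < 10 ∧ j = 10*a+r :=
    ⟨j/10, j%10, by omega, by omega, by omega⟩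
  interval_cases r
  · have h := ceil_div_le (3*0*(10*n-3) - (10*a)) (10*(10*n-3)) 0 hp (by linarith)
    rw [show 10*a+0 = 10*a from by ring, dd0 n a hn]; linarith
  · have hb := h1 (by omega)
    have h := ceil_div_le (3*1*(10*n-3) - (10*a+1)) (10*(10*n-3)) 0 hp (by linarith)
    rw [dd1 n a hn]; linarith
  · have h := ceil_div_le (3*2*(10*n-3) - (10*a+2)) (10*(10*n-3)) 1 hp (by linarith)
    rw [dd2 n a hn]; linarith
  · have h := ceil_div_le (3*3*(10*n-3) - (10*a+3)) (10*(10*n-3)) 1 hp (by linarith)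
    rw [dd3 n a hn]; linarith
  · have h := ceil_div_le (3*4*(10*n-3) - (10*a+4)) (10*(10*n-3)) 2 hp (by linarith)
    rw [dd4 n a hn]; linarith
  · have h := ceil_div_le (3*5*(10*n-3) - (10*a+5)) (10*(10*n-3)) 2 hp (by linarith)
    rw [dd5 n a hn]; linarith
  · have h := ceil_div_le (3*6*(10*n-3) - (10*a+6)) (10*(10*n-3)) 2 hp (by linarith)
    rw [dd6 n a hn]; linarith
  · have hb := h7 (by omega)
    have h := ceil_div_le (3*7*(10*n-3) - (10*a+7)) (10*(10*n-3)) 2 hp (by linarith)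
    rw [dd7 n a hn]; linarith
  · have h := ceil_div_le (3*8*(10*n-3) - (10*a+8)) (10*(10*n-3)) 3 hp (by linarith)
    rw [dd8 n a hn]; linarith
  · have h := ceil_div_le (3*9*(10*n-3) - (10*a+9)) (10*(10*n-3)) 3 hp (by linarith)
    rw [dd9 n a hn]; linarith

lemma delta_nonpos_of (n j : ℤ) (hn : 1 ≤ n) (hj : 0 ≤ j)
    (hra : 1 ≤ j % 10) (hrb : j % 10 ≤ 7) (hj' : j ≤ 30*n-19)
    (h4 : j % 10 = 4 → j ≤ 20*n-7) :
    delta25m n j ≤ 0 := by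
  have hp : (0:ℤ) < 10*(10*n-3) := by linarith
  obtain ⟨a, r, hr0, hr9, rfl⟩ : ∃ a r, 1 ≤ r ∧ r ≤ 7 ∧ j = 10*a+r :=
    ⟨j/10, j%10, by omega, by omega, by omega⟩
  interval_cases r
  · have h := le_ceil_div (3*1*(10*n-3) - (10*a+1)) (10*(10*n-3)) 0 hp (by linarith)
    rw [dd1 n a hn]; linarith
  · have h := le_ceil_div (3*2*(10*n-3) - (10*a+2)) (10*(10*n-3)) 1 hp (by linarith)
    rw [dd2 n a hn]; linarith
  · have h := le_ceil_div (3*3*(10*n-3) - (10*a+3)) (10*(10*n-3)) 1 hp (by linarith)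
    rw [dd3 n a hn]; linarith
  · have hb := h4 (by omega)
    have h := le_ceil_div (3*4*(10*n-3) - (10*a+4)) (10*(10*n-3)) 2 hp (by linarith)
    rw [dd4 n a hn]; linarith
  · have h := le_ceil_div (3*5*(10*n-3) - (10*a+5)) (10*(10*n-3)) 2 hp (by linarith)
    rw [dd5 n a hn]; linarith
  · have h := le_ceil_div (3*6*(10*n-3) - (10*a+6)) (10*(10*n-3)) 2 hp (by linarith)
    rw [dd6 n a hn]; linarith
  · have h := le_ceil_div (3*7*(10*n-3) - (10*a+7)) (10*(10*n-3)) 2 hp (by linarith)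
    rw [dd7 n a hn]; linarith

lemma tau_block (n i : ℤ) (hn : 1 ≤ n) (hi : 0 ≤ i) (hi' : i ≤ 3*n-2) :
    tau25m n (10*(i+1)+1) = tau25m n (10*i+1) + (-1) + (if n-1 ≤ i then 1 else 0)
      + (if 2*n-1 ≤ i then 1 else 0) := by
  have hp : (0:ℤ) < 10*(10*n-3) := by linarith
  have hb := tau_block10 n (10*i+1) (by linarith)
  rw [show 10*i+1+1 = 10*i+2 by ring, show 10*i+1+2 = 10*i+3 by ring,
      show 10*i+1+3 = 10*i+4 by ring, show 10*i+1+4 = 10*i+5 by ring,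
      show 10*i+1+5 = 10*i+6 by ring, show 10*i+1+6 = 10*i+7 by ring,
      show 10*i+1+7 = 10*i+8 by ring, show 10*i+1+8 = 10*i+9 by ring,
      show 10*i+1+9 = 10*(i+1) by ring, show 10*i+1+10 = 10*(i+1)+1 by ring] at hb
  have d1 : delta25m n (10*i+1) = -1 := by
    rw [dd1 n i hn, ceil_div_eq _ _ 1 (by linarith) (by linarith) (by linarith)]; norm_num
  have d2 : delta25m n (10*i+2) = 0 := by
    rw [dd2 n i hn, ceil_div_eq _ _ 1 (by linarith) (by linarith) (by linarith)]; norm_num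
  have d3 : delta25m n (10*i+3) = 0 := by
    rw [dd3 n i hn, ceil_div_eq _ _ 1 (by linarith) (by linarith) (by linarith)]; norm_num
  have d4 : delta25m n (10*i+4) = if 2*n-1 ≤ i then 1 else 0 := by
    split_ifs with h
    · rw [dd4 n i hn, ceil_div_eq _ _ 1 (by linarith) (by linarith) (by linarith)]; norm_num
    · rw [dd4 n i hn, ceil_div_eq _ _ 2 (by linarith) (by linarith) (by linarith)]; norm_num
  have d5 : delta25m n (10*i+5) = 0 := by
    rw [dd5 n i hn, ceil_div_eq _ _ 2 (by linarith) (by linarith) (by linarith)]; norm_num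
  have d6 : delta25m n (10*i+6) = 0 := by
    rw [dd6 n i hn, ceil_div_eq _ _ 2 (by linarith) (by linarith) (by linarith)]; norm_num
  have d7 : delta25m n (10*i+7) = if n-1 ≤ i then 0 else -1 := by
    split_ifs with h
    · rw [dd7 n i hn, ceil_div_eq _ _ 2 (by linarith) (by linarith) (by linarith)]; norm_num
    · rw [dd7 n i hn, ceil_div_eq _ _ 3 (by linarith) (by linarith) (by linarith)]; norm_num
  have d8 : delta25m n (10*i+8) = 0 := by
    rw [dd8 n i hn, ceil_div_eq _ _ 3 (by linarith) (by linarith) (by linarith)]; norm_num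
  have d9 : delta25m n (10*i+9) = 0 := by
    rw [dd9 n i hn, ceil_div_eq _ _ 3 (by linarith) (by linarith) (by linarith)]; norm_num
  have d0 : delta25m n (10*(i+1)) = 1 := by
    rw [dd0 n (i+1) hn, ceil_div_eq _ _ 0 (by linarith) (by linarith) (by linarith)]; norm_num
  rw [d1, d2, d3, d4, d5, d6, d7, d8, d9, d0] at hb
  rw [hb]; split_ifs <;> ring

lemma tau_mM_small (n i : ℤ) (hn : 1 ≤ n) (hi : 1 ≤ i) (hi' : i ≤ n-1) :
    tau25m n (10*i+1) = tau25m n (10*i-2) + 1 := by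
  have hp : (0:ℤ) < 10*(10*n-3) := by linarith
  have hb := tau_block3 n (10*i-2) (by linarith)
  rw [show 10*i-2+3 = 10*i+1 by ring, show (10*i-2 : ℤ) = 10*(i-1)+8 by ring,
      show 10*(i-1)+8+1 = 10*(i-1)+9 by ring, show 10*(i-1)+8+2 = 10*i by ring] at hb
  have d8 : delta25m n (10*(i-1)+8) = 0 := by
    rw [dd8 n (i-1) hn, ceil_div_eq _ _ 3 (by linarith) (by linarith) (by linarith)]; norm_num
  have d9 : delta25m n (10*(i-1)+9) = 0 := by
    rw [dd9 n (i-1) hn, ceil_div_eq _ _ 3 (by linarith) (by linarith) (by linarith)]; norm_num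
  have d0 : delta25m n (10*i) = 1 := by
    rw [dd0 n i hn, ceil_div_eq _ _ 0 (by linarith) (by linarith) (by linarith)]; norm_num
  rw [d8, d9, d0] at hb
  rw [show (10*i-2 : ℤ) = 10*(i-1)+8 by ring, hb]; ring

lemma tau_mM_big (n i : ℤ) (hn : 1 ≤ n) (hi : n ≤ i) (hi' : i ≤ 3*n-2) :
    tau25m n (10*i+1) = tau25m n (10*i-8) + 1 + (if 2*n ≤ i then 1 else 0) := by
  have hp : (0:ℤ) < 10*(10*n-3) := by linarith
  have hb := tau_block9 n (10*i-8) (by linarith)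
  rw [show 10*i-8+9 = 10*i+1 by ring, show (10*i-8 : ℤ) = 10*(i-1)+2 by ring,
      show 10*(i-1)+2+1 = 10*(i-1)+3 by ring, show 10*(i-1)+2+2 = 10*(i-1)+4 by ring,
      show 10*(i-1)+2+3 = 10*(i-1)+5 by ring, show 10*(i-1)+2+4 = 10*(i-1)+6 by ring,
      show 10*(i-1)+2+5 = 10*(i-1)+7 by ring, show 10*(i-1)+2+6 = 10*(i-1)+8 by ring,
      show 10*(i-1)+2+7 = 10*(i-1)+9 by ring, show 10*(i-1)+2+8 = 10*i by ring] at hb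
  have d2 : delta25m n (10*(i-1)+2) = 0 := by
    rw [dd2 n (i-1) hn, ceil_div_eq _ _ 1 (by linarith) (by linarith) (by linarith)]; norm_num
  have d3 : delta25m n (10*(i-1)+3) = 0 := by
    rw [dd3 n (i-1) hn, ceil_div_eq _ _ 1 (by linarith) (by linarith) (by linarith)]; norm_num
  have d4 : delta25m n (10*(i-1)+4) = if 2*n ≤ i then 1 else 0 := by
    split_ifs with h
    · rw [dd4 n (i-1) hn, ceil_div_eq _ _ 1 (by linarith) (by linarith) (by linarith)]; norm_num
    · rw [dd4 n (i-1) hn, ceil_div_eq _ _ 2 (by linarith) (by linarith) (by linarith)]; norm_num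
  have d5 : delta25m n (10*(i-1)+5) = 0 := by
    rw [dd5 n (i-1) hn, ceil_div_eq _ _ 2 (by linarith) (by linarith) (by linarith)]; norm_num
  have d6 : delta25m n (10*(i-1)+6) = 0 := by
    rw [dd6 n (i-1) hn, ceil_div_eq _ _ 2 (by linarith) (by linarith) (by linarith)]; norm_num
  have d7 : delta25m n (10*(i-1)+7) = 0 := by
    rw [dd7 n (i-1) hn, ceil_div_eq _ _ 2 (by linarith) (by linarith) (by linarith)]; norm_num
  have d8 : delta25m n (10*(i-1)+8) = 0 := by
    rw [dd8 n (i-1) hn, ceil_div_eq _ _ 3 (by linarith) (by linarith) (by linarith)]; norm_num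
  have d9 : delta25m n (10*(i-1)+9) = 0 := by
    rw [dd9 n (i-1) hn, ceil_div_eq _ _ 3 (by linarith) (by linarith) (by linarith)]; norm_num
  have d0 : delta25m n (10*i) = 1 := by
    rw [dd0 n i hn, ceil_div_eq _ _ 0 (by linarith) (by linarith) (by linarith)]; norm_num
  rw [d2, d3, d4, d5, d6, d7, d8, d9, d0] at hb
  rw [show (10*i-8 : ℤ) = 10*(i-1)+2 by ring, hb]; split_ifs <;> ring

lemma myind25 {P : ℤ → Prop} (h0 : P 0) (hs : ∀ k : ℤ, 0 ≤ k → P k → P (k+1)) :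
    ∀ k : ℤ, 0 ≤ k → P k :=
  fun k hk => Int.le_induction h0 (fun m hm => hs m hm) k hk

lemma tauM_val (n : ℤ) (hn : 1 ≤ n) : ∀ i : ℤ, 0 ≤ i → i ≤ 3*n-2 →
    tau25m n (10*i+1) = if i ≤ n-1 then 1-i else if i ≤ 2*n-2 then 2-n else 3-3*n+i := by
  refine myind25 ?_ ?_
  · intro _
    have hp : (0:ℤ) < 10*(10*n-3) := by linarith
    have h0 : tau25m n 0 = 0 := by unfold tau25m; simp
    have h1 := tau_succ' n 0 (le_refl 0)
    have hd : delta25m n (10*0) = 1 := by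
      rw [dd0 n 0 hn, ceil_div_eq _ _ 0 (by linarith) (by linarith) (by linarith)]; norm_num
    rw [show (10*(0:ℤ)) = 0 by ring] at hd
    rw [show (10*(0:ℤ)+1) = 0+1 by ring, h1, h0, hd, if_pos (by omega)]; norm_num
  · intro i hi ih h3
    have ih' := ih (by omega)
    rw [tau_block n i hn hi (by omega), ih']
    split_ifs <;> omega

/-- Structure of the tau function of `Σ(2,5,10n-3)` (`n ≥ 1`): monotonicity between the
local extrema `M_i`, `m_i`, and the values of `τ` at those extrema. -/
theorem tau_structure_25m (n : ℤ) (hn : 1 ≤ n) :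
    (∀ i : ℤ, 0 ≤ i → i ≤ 3 * n - 2 → ∀ j : ℤ, m25m n i ≤ j → j < M25m i →
      tau25m n j ≤ tau25m n (j + 1)) ∧
    (∀ i : ℤ, 0 ≤ i → i ≤ 3 * n - 2 → ∀ j : ℤ, M25m i ≤ j → j < m25m n (i + 1) →
      tau25m n (j + 1) ≤ tau25m n j) ∧
    (∀ j : ℤ, m25m n (3 * n - 1) ≤ j → tau25m n j ≤ tau25m n (j + 1)) ∧
    (∀ i : ℤ, 0 ≤ i → i ≤ n - 1 → tau25m n (M25m i) = 1 - i) ∧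
    (∀ i : ℤ, n ≤ i → i ≤ 2 * n - 2 → tau25m n (M25m i) = 2 - n) ∧
    (∀ i : ℤ, 2 * n - 1 ≤ i → i ≤ 3 * n - 2 → tau25m n (M25m i) = 3 - 3 * n + i) ∧
    (∀ i : ℤ, 0 ≤ i → i ≤ n - 1 → tau25m n (m25m n i) = -i) ∧
    (∀ i : ℤ, n ≤ i → i ≤ 2 * n - 1 → tau25m n (m25m n i) = 1 - n) ∧
    (∀ i : ℤ, 2 * n ≤ i → i ≤ 3 * n - 1 → tau25m n (m25m n i) = 1 - 3 * n + i) := by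
  have hp : (0:ℤ) < 10*(10*n-3) := by linarith
  refine ⟨?_, ?_, ?_, ?_, ?_, ?_, ?_, ?_, ?_⟩
  · -- (a1)
    intro i hi hi' j hj hj'
    simp only [m25m] at hj
    simp only [M25m] at hj'
    have hj0 : 0 ≤ j := by split_ifs at hj <;> omega
    rw [tau_succ' n j hj0]
    have : 0 ≤ delta25m n j := by
      apply delta_nonneg_of n j hn hj0 <;> split_ifs at hj <;> omega
    linarith
  · -- (a2)
    intro i hi hi' j hj hj'
    simp only [M25m] at hj
    simp only [m25m] at hj'
    rw [tau_succ' n j (by omega)]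
    have : delta25m n j ≤ 0 := by
      apply delta_nonpos_of n j hn (by omega) <;> split_ifs at hj' <;> omega
    linarith
  · -- (a3)
    intro j hj
    simp only [m25m] at hj
    rw [if_neg (by omega), if_neg (by omega)] at hj
    rw [tau_succ' n j (by omega)]
    have : 0 ≤ delta25m n j := delta_nonneg_of n j hn (by omega) (by omega) (by omega)
    linarith
  · -- (b1)
    intro i hi hi'
    show tau25m n (10*i+1) = 1 - i
    rw [tauM_val n hn i hi (by omega), if_pos hi']
  · -- (b2)
    intro i hi hi'
    show tau25m n (10*i+1) = 2 - n
    rw [tauM_val n hn i (by omega) (by omega)]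
    split_ifs <;> omega
  · -- (b3)
    intro i hi hi'
    show tau25m n (10*i+1) = 3 - 3*n + i
    rw [tauM_val n hn i (by omega) hi']
    split_ifs <;> omega
  · -- (c1)
    intro i hi hi'
    rcases eq_or_lt_of_le hi with h | h
    · rw [show m25m n i = 0 from by rw [← h]; simp [m25m]]
      have h0 : tau25m n 0 = 0 := by unfold tau25m; simp
      rw [h0]; omega
    · rw [show m25m n i = 10*i-2 by simp only [m25m]; rw [if_neg (by omega), if_pos hi']]
      have := tau_mM_small n i hn (by omega) hi'
      rw [tauM_val n hn i hi (by omega), if_pos hi'] at this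
      omega
  · -- (c2)
    intro i hi hi'
    rw [show m25m n i = 10*i-8 by simp only [m25m]; rw [if_neg (by omega), if_neg (by omega)]]
    have := tau_mM_big n i hn hi (by omega)
    rw [if_neg (by omega), tauM_val n hn i (by omega) (by omega)] at this
    split_ifs at this <;> omega
  · -- (c3)
    intro i hi hi'
    rw [show m25m n i = 10*i-8 by simp only [m25m]; rw [if_neg (by omega), if_neg (by omega)]]
    rcases eq_or_lt_of_le hi' with h | h
    · -- i = 3n-1
      have hM : tau25m n (10*(3*n-2)+1) = 1 := by
        rw [tauM_val n hn (3*n-2) (by omega) (by omega), if_neg (by omega), if_neg (by omega)]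
        ring
      have hd : delta25m n (10*(3*n-2)+1) = -1 := by
        rw [dd1 n (3*n-2) hn, ceil_div_eq _ _ 1 (by linarith) (by linarith) (by linarith)]
        norm_num
      have hs := tau_succ' n (10*(3*n-2)+1) (by omega)
      rw [show (10*i-8 : ℤ) = 10*(3*n-2)+1+1 by omega, hs, hM, hd]
      omega
    · -- i ≤ 3n-2
      have := tau_mM_big n i hn (by omega) (by omega)
      rw [if_pos hi, tauM_val n hn i (by omega) (by omega), if_neg (by omega),
        if_neg (by omega)] at this
      omega
end
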